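/- arXiv:1109.0815 — 7 statements merged into one kernel-verified Lean document; each statement's English description precedes it below -/
import Mathlib

section
/- Let G = (V, E) be a graph and let G̃ be the graph obtained from two disjoint copies G₁, G₂ of G by adding an edge {v₁, v₂} for each v ∈ V. Then the orthogonal projection of the perfect matching polytope of G̃ onto the E₁-coordinates equals the matching polytope of G. -/
open scoped Classical
open Finset

noncomputable section

variable {V : Type*}

/-- A matching of `G`: a set of edges of `G` such that no vertex lies in two of them. -/
def IsMatchingSet (G : SimpleGraph V) (M : Set (Sym2 V)) : Prop :=
  M ⊆ G.edgeSet ∧ ∀ e ∈ M, ∀ f ∈ M, e ≠ f → ∀ v : V, ¬(v ∈ e ∧ v ∈ f)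

/-- A perfect matching of `G`: a matching covering every vertex. -/
def IsPerfectMatchingSet (G : SimpleGraph V) (M : Set (Sym2 V)) : Prop :=
  IsMatchingSet G M ∧ ∀ v : V, ∃ e ∈ M, v ∈ e

/-- Characteristic vector of a set of edges, in `ℝ^{Sym2 V}`. -/
def charVec (M : Set (Sym2 V)) : Sym2 V → ℝ := fun e => if e ∈ M then 1 else 0

/-- The matching polytope of `G`. -/
def matchingPolytope (G : SimpleGraph V) : Set (Sym2 V → ℝ) :=
  convexHull ℝ {x | ∃ M, IsMatchingSet G M ∧ x = charVec M}

/-- The perfect matching polytope of `G`. -/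
def perfectMatchingPolytope (G : SimpleGraph V) : Set (Sym2 V → ℝ) :=
  convexHull ℝ {x | ∃ M, IsPerfectMatchingSet G M ∧ x = charVec M}

/-- The graph `G̃` on two disjoint copies of `V`, with the two copies of `G` and an
edge `{v₁, v₂}` joining the two copies of each vertex `v`. -/
def tildeGraph (G : SimpleGraph V) : SimpleGraph (V ⊕ V) where
  Adj a b := match a, b with
    | .inl u, .inl v => G.Adj u v
    | .inr u, .inr v => G.Adj u v
    | .inl u, .inr v => u = v
    | .inr u, .inl v => u = v
  symm := ⟨by
    rintro (u | u) (v | v) h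
    · exact G.adj_symm h
    · exact h.symm
    · exact h.symm
    · exact G.adj_symm h⟩
  loopless := ⟨by rintro (u | u) h <;> exact G.irrefl h⟩

/-- Orthogonal projection of `ℝ^{Ẽ}` onto the `E₁`-coordinates (the first copy of `G`). -/
def projE1 : (Sym2 (V ⊕ V) → ℝ) → (Sym2 V → ℝ) :=
  fun y e => y (e.map Sum.inl)

variable [Fintype V]

/-- `x(δ(v))`: sum of `x` over the edges of `G` incident to `v`. -/
def degSum (G : SimpleGraph V) (x : Sym2 V → ℝ) (v : V) : ℝ :=
  ∑ e ∈ G.incidenceFinset v, x e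

/-- The lifting `x̃` of `x`: it copies `x` on both copies of `G` and puts
`1 - x(δ(v))` on the linking edge `{v₁, v₂}`. -/
def tildeLift (G : SimpleGraph V) (x : Sym2 V → ℝ) : Sym2 (V ⊕ V) → ℝ :=
  Sym2.lift ⟨fun a b =>
    match a, b with
    | .inl u, .inl v => x s(u, v)
    | .inr u, .inr v => x s(u, v)
    | .inl u, .inr v => if u = v then 1 - degSum G x u else 0
    | .inr u, .inl v => if v = u then 1 - degSum G x v else 0,
    by
      rintro (u | u) (v | v)
      · show x s(u, v) = x s(v, u); rw [Sym2.eq_swap]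
      · rfl
      · rfl
      · show x s(u, v) = x s(v, u); rw [Sym2.eq_swap]⟩

/-- The cut `δ(S)`: edges of `H` with exactly one endpoint in `S`. -/
def cutEdges {W : Type*} [Fintype W] (H : SimpleGraph W) (S : Finset W) : Finset (Sym2 W) :=
  H.edgeFinset.filter fun e => (∃ v ∈ e, v ∈ S) ∧ (∃ v ∈ e, v ∉ S)

/-- `E[S]`: edges of `G` with both endpoints in `S`. -/
def insideEdges (G : SimpleGraph V) (S : Finset V) : Finset (Sym2 V) :=
  G.edgeFinset.filter fun e => ∀ v ∈ e, v ∈ S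

end

/-- The orthogonal projection of the perfect matching polytope of `G̃` onto the
`E₁`-coordinates equals the matching polytope of `G`. -/
theorem projection_perfect_matching_polytope {V : Type*} [Fintype V] (G : SimpleGraph V) :
    projE1 '' perfectMatchingPolytope (tildeGraph G) = matchingPolytope G := by
  classical
  have hlin : IsLinearMap ℝ (projE1 (V := V)) := ⟨fun x y => rfl, fun c x => rfl⟩
  rw [perfectMatchingPolytope, matchingPolytope, hlin.image_convexHull]
  congr 1
  ext x
  constructor
  · rintro ⟨y, ⟨N, ⟨⟨hsub, hdisj⟩, hcov⟩, rfl⟩, rfl⟩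
    refine ⟨{e : Sym2 V | Sym2.map Sum.inl e ∈ N}, ⟨?_, ?_⟩, ?_⟩
    · intro e he
      induction e using Sym2.ind with
      | _ u v =>
        have h := hsub he
        rw [Sym2.map_pair_eq, SimpleGraph.mem_edgeSet] at h
        exact h
    · intro e he f hf hne v ⟨hv1, hv2⟩
      exact hdisj _ he _ hf (fun h => hne (Sym2.map.injective Sum.inl_injective h))
        (Sum.inl v) ⟨Sym2.mem_map.2 ⟨v, hv1, rfl⟩, Sym2.mem_map.2 ⟨v, hv2, rfl⟩⟩
    · funext e; rfl
  · rintro ⟨M, ⟨hsub, hdisj⟩, rfl⟩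
    set T : Set (Sym2 (V ⊕ V)) :=
      (Sym2.map Sum.inl '' M) ∪ (Sym2.map Sum.inr '' M) ∪
        {e | ∃ v, (∀ f ∈ M, v ∉ f) ∧ e = s(Sum.inl v, Sum.inr v)} with hT
    -- membership facts
    have memA : ∀ {e : Sym2 V}, e ∈ M → ∀ {w : V ⊕ V}, w ∈ Sym2.map Sum.inl e →
        ∃ a : V, w = Sum.inl a ∧ a ∈ e := by
      intro e he w hw
      obtain ⟨a, ha, rfl⟩ := Sym2.mem_map.1 hw
      exact ⟨a, rfl, ha⟩
    have memB : ∀ {e : Sym2 V}, e ∈ M → ∀ {w : V ⊕ V}, w ∈ Sym2.map Sum.inr e →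
        ∃ a : V, w = Sum.inr a ∧ a ∈ e := by
      intro e he w hw
      obtain ⟨a, ha, rfl⟩ := Sym2.mem_map.1 hw
      exact ⟨a, rfl, ha⟩
    have hmatch : IsMatchingSet (tildeGraph G) T := by
      constructor
      · rintro e ((⟨e', he', rfl⟩ | ⟨e', he', rfl⟩) | ⟨v, -, rfl⟩)
        · induction e' using Sym2.ind with
          | _ u v =>
            rw [Sym2.map_pair_eq, SimpleGraph.mem_edgeSet]
            exact hsub he'
        · induction e' using Sym2.ind with
          | _ u v =>
            rw [Sym2.map_pair_eq, SimpleGraph.mem_edgeSet]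
            exact hsub he'
        · rw [SimpleGraph.mem_edgeSet]; exact rfl
      · rintro e ((⟨e', he', rfl⟩ | ⟨e', he', rfl⟩) | ⟨v, hv, rfl⟩)
          f ((⟨f', hf', rfl⟩ | ⟨f', hf', rfl⟩) | ⟨u, hu, rfl⟩) hne w ⟨hw1, hw2⟩
        · obtain ⟨a, rfl, ha⟩ := memA he' hw1
          obtain ⟨b, hb, hb'⟩ := memA hf' hw2
          obtain rfl : a = b := Sum.inl.inj hb
          exact hdisj _ he' _ hf' (fun h => hne (h ▸ rfl)) a ⟨ha, hb'⟩
        · obtain ⟨a, rfl, -⟩ := memA he' hw1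
          obtain ⟨b, hb, -⟩ := memB hf' hw2
          exact Sum.inl_ne_inr hb
        · obtain ⟨a, rfl, ha⟩ := memA he' hw1
          rcases Sym2.mem_iff.1 hw2 with h | h
          · obtain rfl := Sum.inl.inj h
            exact hu _ he' ha
          · exact Sum.inl_ne_inr h
        · obtain ⟨a, rfl, -⟩ := memB he' hw1
          obtain ⟨b, hb, -⟩ := memA hf' hw2
          exact Sum.inl_ne_inr hb.symm
        · obtain ⟨a, rfl, ha⟩ := memB he' hw1
          obtain ⟨b, hb, hb'⟩ := memB hf' hw2
          obtain rfl : a = b := Sum.inr.inj hb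
          exact hdisj _ he' _ hf' (fun h => hne (h ▸ rfl)) a ⟨ha, hb'⟩
        · obtain ⟨a, rfl, ha⟩ := memB he' hw1
          rcases Sym2.mem_iff.1 hw2 with h | h
          · exact Sum.inl_ne_inr h.symm
          · obtain rfl := Sum.inr.inj h
            exact hu _ he' ha
        · obtain ⟨b, hb, hb'⟩ := memA hf' hw2
          rcases Sym2.mem_iff.1 hw1 with h | h
          · subst h
            obtain rfl := Sum.inl.inj hb
            exact hv _ hf' hb'
          · subst h
            exact Sum.inl_ne_inr hb.symm
        · obtain ⟨b, hb, hb'⟩ := memB hf' hw2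
          rcases Sym2.mem_iff.1 hw1 with h | h
          · subst h
            exact Sum.inl_ne_inr hb
          · subst h
            obtain rfl := Sum.inr.inj hb
            exact hv _ hf' hb'
        · rcases Sym2.mem_iff.1 hw1 with h | h <;> rcases Sym2.mem_iff.1 hw2 with h' | h' <;>
            subst h
          · obtain rfl := Sum.inl.inj h'
            exact hne rfl
          · exact Sum.inl_ne_inr h'
          · exact Sum.inl_ne_inr h'.symm
          · obtain rfl := Sum.inr.inj h'
            exact hne rfl
    have hperf : IsPerfectMatchingSet (tildeGraph G) T := by
      refine ⟨hmatch, ?_⟩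
      rintro (v | v)
      · by_cases hv : ∃ e ∈ M, v ∈ e
        · obtain ⟨e, he, hve⟩ := hv
          exact ⟨Sym2.map Sum.inl e, Or.inl (Or.inl ⟨e, he, rfl⟩),
            Sym2.mem_map.2 ⟨v, hve, rfl⟩⟩
        · push_neg at hv
          exact ⟨s(Sum.inl v, Sum.inr v), Or.inr ⟨v, hv, rfl⟩, Sym2.mem_iff.2 (Or.inl rfl)⟩
      · by_cases hv : ∃ e ∈ M, v ∈ e
        · obtain ⟨e, he, hve⟩ := hv
          exact ⟨Sym2.map Sum.inr e, Or.inl (Or.inr ⟨e, he, rfl⟩),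
            Sym2.mem_map.2 ⟨v, hve, rfl⟩⟩
        · push_neg at hv
          exact ⟨s(Sum.inl v, Sum.inr v), Or.inr ⟨v, hv, rfl⟩, Sym2.mem_iff.2 (Or.inr rfl)⟩
    refine ⟨charVec T, ⟨T, hperf, rfl⟩, ?_⟩
    funext e
    have hiff : Sym2.map Sum.inl e ∈ T ↔ e ∈ M := by
      constructor
      · rintro ((⟨e', he', h⟩ | ⟨e', he', h⟩) | ⟨v, -, h⟩)
        · rwa [← Sym2.map.injective Sum.inl_injective h]
        · induction e using Sym2.ind with
          | _ u w =>
            exfalso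
            have : Sum.inl u ∈ Sym2.map Sum.inr e' := by
              rw [h, Sym2.map_pair_eq]; exact Sym2.mem_iff.2 (Or.inl rfl)
            obtain ⟨b, hb, -⟩ := memB he' this
            exact Sum.inl_ne_inr hb
        · exfalso
          have : Sum.inr v ∈ Sym2.map Sum.inl e := by
            rw [h]; exact Sym2.mem_iff.2 (Or.inr rfl)
          obtain ⟨a, -, ha⟩ := Sym2.mem_map.1 this
          exact Sum.inl_ne_inr ha
      · intro h
        exact Or.inl (Or.inl ⟨e, h, rfl⟩)
    simp only [projE1, charVec]
    simp only [hiff]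
end

section
/- Let G = (V,E) be a graph, let x ∈ ℝ^E satisfy x ≥ 0 and x(δ(v)) ≤ 1 for all v ∈ V, and define x̃ ∈ ℝ^{Ẽ} by x̃ restricted to E₁ equal to x, x̃ restricted to E₂ equal to x, and x̃_{{v₁,v₂}} = 1 − x(δ(v)) for each v ∈ V. Then x̃ ≥ 0 and x̃(δ(ṽ)) = 1 for every vertex ṽ of G̃. -/
open scoped Classical
open Finset

section Aux

open SimpleGraph

lemma tildeLift_inl_inl {V : Type*} [Fintype V] (G : SimpleGraph V) (x : Sym2 V → ℝ)
    (u w : V) : tildeLift G x s(Sum.inl u, Sum.inl w) = x s(u, w) := by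
  simp [tildeLift]

lemma tildeLift_inr_inr {V : Type*} [Fintype V] (G : SimpleGraph V) (x : Sym2 V → ℝ)
    (u w : V) : tildeLift G x s(Sum.inr u, Sum.inr w) = x s(u, w) := by
  simp [tildeLift]

lemma tildeLift_link {V : Type*} [Fintype V] (G : SimpleGraph V) (x : Sym2 V → ℝ)
    (v : V) : tildeLift G x s(Sum.inl v, Sum.inr v) = 1 - degSum G x v := by
  simp [tildeLift]

lemma tildeLift_map_inl {V : Type*} [Fintype V] (G : SimpleGraph V) (x : Sym2 V → ℝ)
    (e : Sym2 V) : tildeLift G x (e.map Sum.inl) = x e := by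
  induction e using Sym2.ind with
  | _ a b => simp [tildeLift]

lemma tildeLift_map_inr {V : Type*} [Fintype V] (G : SimpleGraph V) (x : Sym2 V → ℝ)
    (e : Sym2 V) : tildeLift G x (e.map Sum.inr) = x e := by
  induction e using Sym2.ind with
  | _ a b => simp [tildeLift]

lemma inc_tilde_inl {V : Type*} [Fintype V] (G : SimpleGraph V) (v : V) :
    (tildeGraph G).incidenceFinset (Sum.inl v) =
      insert s(Sum.inl v, Sum.inr v) ((G.incidenceFinset v).image (Sym2.map Sum.inl)) := by
  ext e
  induction e using Sym2.ind with
  | _ a b =>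
    simp only [SimpleGraph.mem_incidenceFinset, SimpleGraph.incidenceSet,
      SimpleGraph.mem_edgeSet, Set.mem_setOf_eq, Finset.mem_insert, Finset.mem_image]
    constructor
    · rintro ⟨hadj, hv⟩
      rcases a with u | u <;> rcases b with w | w
      · right
        refine ⟨s(u, w), ?_, by simp⟩
        rcases Sym2.mem_iff.mp hv with h | h
        · exact ⟨hadj, by simp [Sum.inl.injEq] at h; simp [h]⟩
        · exact ⟨hadj, by simp [Sum.inl.injEq] at h; simp [h]⟩
      · left
        have : u = w := hadj
        rcases Sym2.mem_iff.mp hv with h | h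
        · simp only [Sum.inl.injEq] at h
          subst h; subst this; rfl
        · exact absurd h (by simp)
      · left
        have huw : u = w := hadj
        rcases Sym2.mem_iff.mp hv with h | h
        · exact absurd h (by simp)
        · simp only [Sum.inl.injEq] at h
          subst huw; subst h
          rw [Sym2.eq_swap]
      · rcases Sym2.mem_iff.mp hv with h | h <;> exact absurd h (by simp)
    · rintro (h | ⟨f, hf, hmap⟩)
      · rw [Sym2.eq_iff] at h
        rcases h with ⟨ha, hb⟩ | ⟨ha, hb⟩ <;> subst ha <;> subst hb
        · exact ⟨rfl, by simp⟩
        · exact ⟨rfl, by simp⟩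
      · induction f using Sym2.ind with
        | _ c d =>
          obtain ⟨hadj, hvmem⟩ := hf
          rw [Sym2.map_pair_eq, Sym2.eq_iff] at hmap
          rcases hmap with ⟨ha, hb⟩ | ⟨ha, hb⟩ <;> subst ha <;> subst hb
          · exact ⟨(SimpleGraph.mem_edgeSet G).mp hadj, by
              rcases Sym2.mem_iff.mp hvmem with h | h <;> subst h <;> simp⟩
          · exact ⟨((SimpleGraph.mem_edgeSet G).mp hadj).symm, by
              rcases Sym2.mem_iff.mp hvmem with h | h <;> subst h <;> simp⟩

lemma inc_tilde_inr {V : Type*} [Fintype V] (G : SimpleGraph V) (v : V) :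
    (tildeGraph G).incidenceFinset (Sum.inr v) =
      insert s(Sum.inl v, Sum.inr v) ((G.incidenceFinset v).image (Sym2.map Sum.inr)) := by
  ext e
  induction e using Sym2.ind with
  | _ a b =>
    simp only [SimpleGraph.mem_incidenceFinset, SimpleGraph.incidenceSet,
      SimpleGraph.mem_edgeSet, Set.mem_setOf_eq, Finset.mem_insert, Finset.mem_image]
    constructor
    · rintro ⟨hadj, hv⟩
      rcases a with u | u <;> rcases b with w | w
      · rcases Sym2.mem_iff.mp hv with h | h <;> exact absurd h (by simp)
      · left
        have : u = w := hadj
        rcases Sym2.mem_iff.mp hv with h | h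
        · exact absurd h (by simp)
        · simp only [Sum.inr.injEq] at h
          subst h; subst this; rfl
      · left
        have huw : u = w := hadj
        rcases Sym2.mem_iff.mp hv with h | h
        · simp only [Sum.inr.injEq] at h
          subst huw; subst h
          rw [Sym2.eq_swap]
        · exact absurd h (by simp)
      · right
        refine ⟨s(u, w), ?_, by simp⟩
        rcases Sym2.mem_iff.mp hv with h | h
        · exact ⟨hadj, by simp [Sum.inr.injEq] at h; simp [h]⟩
        · exact ⟨hadj, by simp [Sum.inr.injEq] at h; simp [h]⟩
    · rintro (h | ⟨f, hf, hmap⟩)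
      · rw [Sym2.eq_iff] at h
        rcases h with ⟨ha, hb⟩ | ⟨ha, hb⟩ <;> subst ha <;> subst hb
        · exact ⟨rfl, by simp⟩
        · exact ⟨rfl, by simp⟩
      · induction f using Sym2.ind with
        | _ c d =>
          obtain ⟨hadj, hvmem⟩ := hf
          rw [Sym2.map_pair_eq, Sym2.eq_iff] at hmap
          rcases hmap with ⟨ha, hb⟩ | ⟨ha, hb⟩ <;> subst ha <;> subst hb
          · exact ⟨(SimpleGraph.mem_edgeSet G).mp hadj, by
              rcases Sym2.mem_iff.mp hvmem with h | h <;> subst h <;> simp⟩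
          · exact ⟨((SimpleGraph.mem_edgeSet G).mp hadj).symm, by
              rcases Sym2.mem_iff.mp hvmem with h | h <;> subst h <;> simp⟩

lemma degSum_tilde {V : Type*} [Fintype V] (G : SimpleGraph V) (y : Sym2 (V ⊕ V) → ℝ)
    (w : V ⊕ V) :
    degSum (tildeGraph G) y w = ∑ e ∈ (tildeGraph G).incidenceFinset w, y e := by
  rw [degSum]
  refine Finset.sum_congr ?_ (fun _ _ => rfl)
  ext e
  rw [SimpleGraph.mem_incidenceFinset, SimpleGraph.mem_incidenceFinset]

end Aux

/-- The lifting `x̃` of a point `x ∈ ℝ^E` with `x ≥ 0` and `x(δ(v)) ≤ 1` for all `v`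
is nonnegative and satisfies `x̃(δ(vt)) = 1` at every vertex `vt` of `G̃`. -/
theorem tildeLift_nonneg_and_degree_one {V : Type*} [Fintype V] (G : SimpleGraph V)
    (x : Sym2 V → ℝ)
    (hsupp : ∀ e ∉ G.edgeSet, x e = 0)
    (hx0 : ∀ e, 0 ≤ x e)
    (hdeg : ∀ v, degSum G x v ≤ 1) :
    (∀ et, 0 ≤ tildeLift G x et) ∧
      ∀ vt : V ⊕ V, degSum (tildeGraph G) (tildeLift G x) vt = 1 := by
  constructor
  · intro et
    induction et using Sym2.ind with
    | _ a b =>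
      rcases a with u | u <;> rcases b with w | w <;> simp only [tildeLift, Sym2.lift_mk]
      · exact hx0 _
      · split_ifs with h
        · subst h; linarith [hdeg u]
        · exact le_refl 0
      · split_ifs with h
        · subst h; linarith [hdeg w]
        · exact le_refl 0
      · exact hx0 _
  · have hnotmem_l : ∀ v : V, s(Sum.inl v, Sum.inr v) ∉
        (G.incidenceFinset v).image (Sym2.map Sum.inl) := by
      intro v hmem
      obtain ⟨f, _, hmap⟩ := Finset.mem_image.mp hmem
      induction f using Sym2.ind with
      | _ c d =>
        rw [Sym2.map_pair_eq, Sym2.eq_iff] at hmap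
        rcases hmap with ⟨_, h⟩ | ⟨h, _⟩ <;> exact Sum.inl_ne_inr h
    have hnotmem_r : ∀ v : V, s(Sum.inl v, Sum.inr v) ∉
        (G.incidenceFinset v).image (Sym2.map Sum.inr) := by
      intro v hmem
      obtain ⟨f, _, hmap⟩ := Finset.mem_image.mp hmem
      induction f using Sym2.ind with
      | _ c d =>
        rw [Sym2.map_pair_eq, Sym2.eq_iff] at hmap
        rcases hmap with ⟨h, _⟩ | ⟨_, h⟩ <;> exact Sum.inl_ne_inr h.symm
    rintro (v | v)
    · rw [degSum_tilde, inc_tilde_inl]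
      rw [Finset.sum_insert (hnotmem_l v),
        Finset.sum_image (fun a _ b _ h => Sym2.map.injective Sum.inl_injective h),
        tildeLift_link]
      have : ∑ e ∈ G.incidenceFinset v, tildeLift G x (Sym2.map Sum.inl e)
          = degSum G x v := by
        refine Finset.sum_congr rfl fun e _ => ?_
        exact tildeLift_map_inl G x e
      rw [this]; ring
    · rw [degSum_tilde, inc_tilde_inr]
      rw [Finset.sum_insert (hnotmem_r v),
        Finset.sum_image (fun a _ b _ h => Sym2.map.injective Sum.inr_injective h),
        tildeLift_link]
      have : ∑ e ∈ G.incidenceFinset v, tildeLift G x (Sym2.map Sum.inr e)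
          = degSum G x v := by
        refine Finset.sum_congr rfl fun e _ => ?_
        exact tildeLift_map_inr G x e
      rw [this]; ring
end

section
/- (Hoffman's Circulation Theorem.) In a finite digraph D = (V,A) with lower and upper arc capacities ℓ, u ∈ (ℝ ∪ {−∞,+∞})^A with ℓ ≤ u, a circulation y (a vector y ∈ ℝ^A with ℓ ≤ y ≤ u and, at every node, total flow on outgoing arcs equal to total flow on incoming arcs) exists if and only if ℓ(δ^in(W)) ≤ u(δ^out(W)) holds for all node subsets W ⊆ V. -/
open scoped Classical
open Finset

private lemma cut_sum {V : Type*} [Fintype V] [DecidableEq V]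
    (arcs : Finset (V × V)) (y : V × V → ℝ) (W : Finset V) :
    ∑ v ∈ W, ((∑ a ∈ arcs.filter (fun a => a.1 = v), y a)
        - ∑ a ∈ arcs.filter (fun a => a.2 = v), y a)
      = (∑ a ∈ arcs.filter (fun a => a.1 ∈ W ∧ a.2 ∉ W), y a)
        - ∑ a ∈ arcs.filter (fun a => a.1 ∉ W ∧ a.2 ∈ W), y a := by
  rw [Finset.sum_sub_distrib,
      Finset.sum_fiberwise_eq_sum_filter arcs W (fun a : V × V => a.1) y,
      Finset.sum_fiberwise_eq_sum_filter arcs W (fun a : V × V => a.2) y]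
  have h1 : ∑ a ∈ arcs.filter (fun a => a.1 ∈ W), y a
      = (∑ a ∈ arcs.filter (fun a => a.1 ∈ W ∧ a.2 ∈ W), y a)
        + ∑ a ∈ arcs.filter (fun a => a.1 ∈ W ∧ a.2 ∉ W), y a := by
    rw [← Finset.sum_filter_add_sum_filter_not (arcs.filter (fun a => a.1 ∈ W))
        (fun a => a.2 ∈ W), Finset.filter_filter, Finset.filter_filter]
  have h2 : ∑ a ∈ arcs.filter (fun a => a.2 ∈ W), y a
      = (∑ a ∈ arcs.filter (fun a => a.1 ∈ W ∧ a.2 ∈ W), y a)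
        + ∑ a ∈ arcs.filter (fun a => a.1 ∉ W ∧ a.2 ∈ W), y a := by
    rw [← Finset.sum_filter_add_sum_filter_not (arcs.filter (fun a => a.2 ∈ W))
        (fun a => a.1 ∈ W), Finset.filter_filter, Finset.filter_filter]
    congr 1
    · apply Finset.sum_congr _ (fun _ _ => rfl)
      apply Finset.filter_congr; intro a _; tauto
    · apply Finset.sum_congr _ (fun _ _ => rfl)
      apply Finset.filter_congr; intro a _; tauto
  linarith

private lemma sum_update {ι : Type*} [DecidableEq ι] (s : Finset ι) (f : ι → ℝ) (i : ι) (b : ℝ) :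
    ∑ x ∈ s, Function.update f i b x = (∑ x ∈ s, f x) + (if i ∈ s then b - f i else 0) := by
  by_cases h : i ∈ s
  · rw [Finset.sum_update_of_mem h, if_pos h,
        ← Finset.sum_erase_add s f h, Finset.sdiff_singleton_eq_erase]
    ring
  · rw [if_neg h, add_zero]
    apply Finset.sum_congr rfl
    intro x hx
    exact Function.update_of_ne (fun hxi : x = i => h (hxi ▸ hx)) _ _

private lemma real_hoffman {V : Type*} [Fintype V] [DecidableEq V]
    (arcs : Finset (V × V)) (l u : V × V → ℝ)
    (hlu : ∀ a ∈ arcs, l a ≤ u a)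
    (hcut : ∀ W : Finset V,
        ∑ a ∈ arcs.filter (fun a => a.1 ∉ W ∧ a.2 ∈ W), l a
          ≤ ∑ a ∈ arcs.filter (fun a => a.1 ∈ W ∧ a.2 ∉ W), u a) :
    ∃ y : V × V → ℝ, (∀ a ∈ arcs, l a ≤ y a ∧ y a ≤ u a) ∧
      ∀ v : V, ∑ a ∈ arcs.filter (fun a => a.1 = v), y a
             = ∑ a ∈ arcs.filter (fun a => a.2 = v), y a := by
  set f : (V × V → ℝ) → V → ℝ := fun y v =>
    (∑ a ∈ arcs.filter (fun a => a.1 = v), y a)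
      - ∑ a ∈ arcs.filter (fun a => a.2 = v), y a with hf
  set G : (V × V → ℝ) → ℝ := fun y => ∑ v : V, (f y v) ^ 2 with hG
  set K : Set (V × V → ℝ) :=
    Set.pi Set.univ (fun a => if a ∈ arcs then Set.Icc (l a) (u a) else {0}) with hK
  have hKc : IsCompact K := isCompact_univ_pi fun a => by
    split_ifs; exacts [isCompact_Icc, isCompact_singleton]
  have hKne : K.Nonempty := by
    refine ⟨fun a => if a ∈ arcs then l a else 0, fun a _ => ?_⟩
    show (if a ∈ arcs then l a else 0) ∈ (if a ∈ arcs then Set.Icc (l a) (u a) else ({0} : Set ℝ))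
    split_ifs with h
    · exact ⟨le_refl _, hlu a h⟩
    · rfl
  have hGc : Continuous G := by
    rw [hG]
    apply continuous_finset_sum
    intro v _
    apply Continuous.pow
    simp only [hf]
    exact Continuous.sub (continuous_finset_sum _ fun a _ => continuous_apply a)
      (continuous_finset_sum _ fun a _ => continuous_apply a)
  obtain ⟨y, hyK, hymin⟩ := hKc.exists_isMinOn hKne hGc.continuousOn
  have hybd : ∀ a ∈ arcs, l a ≤ y a ∧ y a ≤ u a := by
    intro a ha
    have h := hyK a (Set.mem_univ a)
    simp only [if_pos ha] at h
    exact h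
  -- effect of perturbing one arc on the excess function
  have fupd : ∀ a ∈ arcs, ∀ ε : ℝ, ∀ v : V,
      f (Function.update y a (y a + ε)) v
        = f y v + ((if a.1 = v then ε else 0) - (if a.2 = v then ε else 0)) := by
    intro a ha ε v
    have h1 : ∑ b ∈ arcs.filter (fun b => b.1 = v), Function.update y a (y a + ε) b
        = (∑ b ∈ arcs.filter (fun b => b.1 = v), y b) + (if a.1 = v then ε else 0) := by
      rw [sum_update]
      congr 1
      by_cases h : a.1 = v
      · rw [if_pos (Finset.mem_filter.mpr ⟨ha, h⟩), if_pos h]; ring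
      · rw [if_neg (fun hm : a ∈ arcs.filter (fun b => b.1 = v) =>
          h (Finset.mem_filter.mp hm).2), if_neg h]
    have h2 : ∑ b ∈ arcs.filter (fun b => b.2 = v), Function.update y a (y a + ε) b
        = (∑ b ∈ arcs.filter (fun b => b.2 = v), y b) + (if a.2 = v then ε else 0) := by
      rw [sum_update]
      congr 1
      by_cases h : a.2 = v
      · rw [if_pos (Finset.mem_filter.mpr ⟨ha, h⟩), if_pos h]; ring
      · rw [if_neg (fun hm : a ∈ arcs.filter (fun b => b.2 = v) =>
          h (Finset.mem_filter.mp hm).2), if_neg h]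
    simp only [hf, h1, h2]
    ring
  have Gdiff : ∀ a ∈ arcs, a.1 ≠ a.2 → ∀ ε : ℝ,
      G (Function.update y a (y a + ε))
        = G y + 2*ε*(f y a.1 - f y a.2) + 2*ε^2 := by
    intro a ha hne ε
    have expand : ∀ v : V, (f (Function.update y a (y a + ε)) v)^2
        = (f y v)^2 + (if a.1 = v then 2*(f y v)*ε + ε^2 else 0)
            + (if a.2 = v then -(2*(f y v)*ε) + ε^2 else 0) := by
      intro v
      rw [fupd a ha ε v]
      by_cases h1 : a.1 = v <;> by_cases h2 : a.2 = v
      · exact absurd (h1.trans h2.symm) hne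
      · simp only [if_pos h1, if_neg h2]; ring
      · simp only [if_neg h1, if_pos h2]; ring
      · simp only [if_neg h1, if_neg h2]; ring
    simp only [hG]
    calc ∑ v : V, f (Function.update y a (y a + ε)) v ^ 2
        = ∑ v : V, ((f y v)^2 + (if a.1 = v then 2*(f y v)*ε + ε^2 else 0)
            + (if a.2 = v then -(2*(f y v)*ε) + ε^2 else 0)) :=
          Finset.sum_congr rfl (fun v _ => expand v)
      _ = (∑ v : V, (f y v)^2) + (2*(f y a.1)*ε + ε^2) + (-(2*(f y a.2)*ε) + ε^2) := by
          rw [Finset.sum_add_distrib, Finset.sum_add_distrib,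
              Finset.sum_ite_eq, Finset.sum_ite_eq, if_pos (Finset.mem_univ a.1),
              if_pos (Finset.mem_univ a.2)]
      _ = (∑ v : V, (f y v)^2) + 2*ε*(f y a.1 - f y a.2) + 2*ε^2 := by ring
  -- optimality conditions
  have key1 : ∀ a ∈ arcs, y a < u a → f y a.2 ≤ f y a.1 := by
    intro a ha hya
    by_contra hc
    push_neg at hc
    have hne : a.1 ≠ a.2 := fun h => by rw [h] at hc; exact lt_irrefl _ hc
    set D := f y a.1 - f y a.2 with hD
    have hD0 : D < 0 := by rw [hD]; linarith
    set ε := min (u a - y a) (-D/2) with hε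
    have hε0 : 0 < ε := lt_min (by linarith) (by linarith)
    have hεu : y a + ε ≤ u a := by
      have := min_le_left (u a - y a) (-D/2); linarith
    have hmem : Function.update y a (y a + ε) ∈ K := by
      intro b _
      by_cases hba : b = a
      · subst hba
        dsimp only
        rw [Function.update_self, if_pos ha]
        exact ⟨by linarith [(hybd b ha).1], hεu⟩
      · rw [Function.update_of_ne hba]
        exact hyK b (Set.mem_univ b)
    have hle : G y ≤ G (Function.update y a (y a + ε)) := hymin hmem
    rw [Gdiff a ha hne ε] at hle
    have hDε : D + ε < 0 := by
      have := min_le_right (u a - y a) (-D/2); linarith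
    have hprod : 0 < ε * (-(D + ε)) := mul_pos hε0 (by linarith)
    rw [← hD] at hle
    nlinarith [hle, hprod]
  have key2 : ∀ a ∈ arcs, l a < y a → f y a.1 ≤ f y a.2 := by
    intro a ha hya
    by_contra hc
    push_neg at hc
    have hne : a.1 ≠ a.2 := fun h => by rw [h] at hc; exact lt_irrefl _ hc
    set D := f y a.1 - f y a.2 with hD
    have hD0 : 0 < D := by rw [hD]; linarith
    set ε := min (y a - l a) (D/2) with hε
    have hε0 : 0 < ε := lt_min (by linarith) (by linarith)
    have hεl : l a ≤ y a + (-ε) := by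
      have := min_le_left (y a - l a) (D/2); linarith
    have hmem : Function.update y a (y a + (-ε)) ∈ K := by
      intro b _
      by_cases hba : b = a
      · subst hba
        dsimp only
        rw [Function.update_self, if_pos ha]
        exact ⟨hεl, by linarith [(hybd b ha).2]⟩
      · rw [Function.update_of_ne hba]
        exact hyK b (Set.mem_univ b)
    have hle : G y ≤ G (Function.update y a (y a + (-ε))) := hymin hmem
    rw [Gdiff a ha hne (-ε)] at hle
    have hDε : 0 < D - ε := by
      have := min_le_right (y a - l a) (D/2); linarith
    have hprod : 0 < ε * (D - ε) := mul_pos hε0 hDε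
    rw [← hD] at hle
    nlinarith [hle, hprod]
  -- conclude: all excesses vanish
  have hsum0 : ∑ v : V, f y v = 0 := by
    have h := cut_sum arcs y Finset.univ
    have e1 : arcs.filter (fun a => a.1 ∈ (Finset.univ : Finset V) ∧ a.2 ∉ Finset.univ) = ∅ :=
      Finset.filter_false_of_mem (fun a _ => by simp)
    have e2 : arcs.filter (fun a => a.1 ∉ (Finset.univ : Finset V) ∧ a.2 ∈ Finset.univ) = ∅ :=
      Finset.filter_false_of_mem (fun a _ => by simp)
    rw [e1, e2] at h
    simp only [hf]
    simpa using h
  by_cases hall : ∀ v : V, f y v = 0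
  · refine ⟨y, hybd, fun v => ?_⟩
    have h := hall v
    simp only [hf] at h
    linarith
  · exfalso
    push_neg at hall
    obtain ⟨v₀, hv₀⟩ := hall
    have hneg : ∃ s : V, f y s < 0 := by
      by_contra hc
      push_neg at hc
      exact hv₀ ((Finset.sum_eq_zero_iff_of_nonneg (fun v _ => hc v)).mp hsum0 v₀
        (Finset.mem_univ v₀))
    obtain ⟨s, hs⟩ := hneg
    set W := Finset.univ.filter (fun v => f y v < 0) with hW
    have hsW : s ∈ W := by simp [hW, hs]
    have hWsum : ∑ v ∈ W, f y v < 0 := by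
      have h := Finset.sum_lt_sum_of_nonempty ⟨s, hsW⟩
        (f := fun v => f y v) (g := fun _ => (0:ℝ))
        (fun i hi => (Finset.mem_filter.mp hi).2)
      simpa using h
    have hO : ∀ a ∈ arcs.filter (fun a => a.1 ∈ W ∧ a.2 ∉ W), y a = u a := by
      intro a ha
      obtain ⟨haa, h1, h2⟩ := Finset.mem_filter.mp ha
      rcases eq_or_lt_of_le (hybd a haa).2 with h | h
      · exact h
      · exfalso
        have hf1 : f y a.1 < 0 := (Finset.mem_filter.mp h1).2
        have hf2 : 0 ≤ f y a.2 := by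
          by_contra hcc
          push_neg at hcc
          exact h2 (Finset.mem_filter.mpr ⟨Finset.mem_univ _, hcc⟩)
        linarith [key1 a haa h]
    have hI : ∀ a ∈ arcs.filter (fun a => a.1 ∉ W ∧ a.2 ∈ W), y a = l a := by
      intro a ha
      obtain ⟨haa, h1, h2⟩ := Finset.mem_filter.mp ha
      rcases eq_or_lt_of_le (hybd a haa).1 with h | h
      · exact h.symm
      · exfalso
        have hf2 : f y a.2 < 0 := (Finset.mem_filter.mp h2).2
        have hf1 : 0 ≤ f y a.1 := by
          by_contra hcc
          push_neg at hcc
          exact h1 (Finset.mem_filter.mpr ⟨Finset.mem_univ _, hcc⟩)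
        linarith [key2 a haa h]
    have hcs := cut_sum arcs y W
    have hOsum : ∑ a ∈ arcs.filter (fun a => a.1 ∈ W ∧ a.2 ∉ W), y a
        = ∑ a ∈ arcs.filter (fun a => a.1 ∈ W ∧ a.2 ∉ W), u a :=
      Finset.sum_congr rfl hO
    have hIsum : ∑ a ∈ arcs.filter (fun a => a.1 ∉ W ∧ a.2 ∈ W), y a
        = ∑ a ∈ arcs.filter (fun a => a.1 ∉ W ∧ a.2 ∈ W), l a :=
      Finset.sum_congr rfl hI
    have hcw := hcut W
    simp only [hf] at hWsum
    linarith

private lemma ereal_coe_sum {ι : Type*} (s : Finset ι) (f : ι → ℝ) :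
    ((∑ i ∈ s, f i : ℝ) : EReal) = ∑ i ∈ s, (f i : EReal) :=
  map_sum (⟨⟨Real.toEReal, EReal.coe_zero⟩, EReal.coe_add⟩ : ℝ →+ EReal) f s


/-- **Hoffman's Circulation Theorem.** In a finite digraph with lower capacities `l`
(possibly `-∞`) and upper capacities `u` (possibly `+∞`) with `l ≤ u`, a circulation
exists if and only if `l(δ^in(W)) ≤ u(δ^out(W))` for every node subset `W`. -/
theorem hoffman_circulation {V : Type*} [Fintype V] [DecidableEq V]
    (arcs : Finset (V × V))
    (l u : V × V → EReal)
    (hl : ∀ a ∈ arcs, l a ≠ ⊤)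
    (hu : ∀ a ∈ arcs, u a ≠ ⊥)
    (hlu : ∀ a ∈ arcs, l a ≤ u a) :
    (∃ y : V × V → ℝ,
        (∀ a ∈ arcs, l a ≤ (y a : EReal) ∧ (y a : EReal) ≤ u a) ∧
        ∀ v : V, ∑ a ∈ arcs.filter (fun a => a.1 = v), y a
               = ∑ a ∈ arcs.filter (fun a => a.2 = v), y a)
      ↔ ∀ W : Finset V,
          ∑ a ∈ arcs.filter (fun a => a.1 ∉ W ∧ a.2 ∈ W), l a
            ≤ ∑ a ∈ arcs.filter (fun a => a.1 ∈ W ∧ a.2 ∉ W), u a := by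
  constructor
  · rintro ⟨y, hyb, hybal⟩ W
    have hflow : ∑ a ∈ arcs.filter (fun a => a.1 ∉ W ∧ a.2 ∈ W), y a
        = ∑ a ∈ arcs.filter (fun a => a.1 ∈ W ∧ a.2 ∉ W), y a := by
      have h := cut_sum arcs y W
      have h0 : ∑ v ∈ W, ((∑ a ∈ arcs.filter (fun a => a.1 = v), y a)
          - ∑ a ∈ arcs.filter (fun a => a.2 = v), y a) = 0 :=
        Finset.sum_eq_zero (fun v _ => by rw [hybal v]; ring)
      linarith
    calc ∑ a ∈ arcs.filter (fun a => a.1 ∉ W ∧ a.2 ∈ W), l a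
        ≤ ∑ a ∈ arcs.filter (fun a => a.1 ∉ W ∧ a.2 ∈ W), ((y a : EReal)) :=
          Finset.sum_le_sum (fun a ha => (hyb a (Finset.mem_filter.mp ha).1).1)
      _ = ((∑ a ∈ arcs.filter (fun a => a.1 ∉ W ∧ a.2 ∈ W), y a : ℝ) : EReal) :=
          (ereal_coe_sum _ _).symm
      _ = ((∑ a ∈ arcs.filter (fun a => a.1 ∈ W ∧ a.2 ∉ W), y a : ℝ) : EReal) := by
          rw [hflow]
      _ = ∑ a ∈ arcs.filter (fun a => a.1 ∈ W ∧ a.2 ∉ W), ((y a : EReal)) :=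
          ereal_coe_sum _ _
      _ ≤ ∑ a ∈ arcs.filter (fun a => a.1 ∈ W ∧ a.2 ∉ W), u a :=
          Finset.sum_le_sum (fun a ha => (hyb a (Finset.mem_filter.mp ha).1).2)
  · intro hcut
    set n := arcs.card with hn
    set C := ∑ a ∈ arcs, (|(l a).toReal| + |(u a).toReal|) with hC
    have hC0 : 0 ≤ C := Finset.sum_nonneg (fun a _ => by positivity)
    have hn0 : (0:ℝ) ≤ (n:ℝ) := Nat.cast_nonneg n
    set M : ℝ := 2*(n:ℝ)*C + C + 1 with hM
    have hM1 : C + 1 ≤ M := by nlinarith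
    have hM0 : 0 < M := by linarith
    have hCbd : ∀ a ∈ arcs, |(l a).toReal| ≤ C ∧ |(u a).toReal| ≤ C := by
      intro a ha
      have h := Finset.single_le_sum
        (f := fun a => |(l a).toReal| + |(u a).toReal|) (fun b _ => by positivity) ha
      constructor
      · linarith [abs_nonneg ((u a).toReal)]
      · linarith [abs_nonneg ((l a).toReal)]
    set l' : V × V → ℝ := fun a => if l a = ⊥ then -M else (l a).toReal with hl'
    set u' : V × V → ℝ := fun a => if u a = ⊤ then M else (u a).toReal with hu'
    have hl'bd : ∀ a ∈ arcs, -M ≤ l' a ∧ l' a ≤ C := by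
      intro a ha
      simp only [hl']
      split_ifs with hb
      · exact ⟨le_refl _, by linarith⟩
      · have := (hCbd a ha).1
        rw [abs_le] at this
        exact ⟨by linarith, this.2⟩
    have hu'bd : ∀ a ∈ arcs, -C ≤ u' a ∧ u' a ≤ M := by
      intro a ha
      simp only [hu']
      split_ifs with hb
      · exact ⟨by linarith, le_refl _⟩
      · have := (hCbd a ha).2
        rw [abs_le] at this
        exact ⟨this.1, by linarith⟩
    have hl'u' : ∀ a ∈ arcs, l' a ≤ u' a := by
      intro a ha
      simp only [hl', hu']
      by_cases hb : l a = ⊥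
      · rw [if_pos hb]
        by_cases ht : u a = ⊤
        · rw [if_pos ht]; linarith
        · rw [if_neg ht]
          have := (hCbd a ha).2
          rw [abs_le] at this
          linarith
      · rw [if_neg hb]
        by_cases ht : u a = ⊤
        · rw [if_pos ht]
          have := (hCbd a ha).1
          rw [abs_le] at this
          linarith
        · rw [if_neg ht]
          exact EReal.toReal_le_toReal (hlu a ha) hb ht
    have hcut' : ∀ W : Finset V,
        ∑ a ∈ arcs.filter (fun a => a.1 ∉ W ∧ a.2 ∈ W), l' a
          ≤ ∑ a ∈ arcs.filter (fun a => a.1 ∈ W ∧ a.2 ∉ W), u' a := by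
      intro W
      set I := arcs.filter (fun a => a.1 ∉ W ∧ a.2 ∈ W) with hIdef
      set O := arcs.filter (fun a => a.1 ∈ W ∧ a.2 ∉ W) with hOdef
      have hIsub : I ⊆ arcs := Finset.filter_subset _ _
      have hOsub : O ⊆ arcs := Finset.filter_subset _ _
      have hIcard : (I.card : ℝ) ≤ (n:ℝ) := Nat.cast_le.mpr (Finset.card_le_card hIsub)
      have hOcard : (O.card : ℝ) ≤ (n:ℝ) := Nat.cast_le.mpr (Finset.card_le_card hOsub)
      have hIle : ∑ a ∈ I, l' a ≤ (n:ℝ)*C := by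
        calc ∑ a ∈ I, l' a ≤ ∑ _a ∈ I, C :=
              Finset.sum_le_sum (fun a ha => (hl'bd a (hIsub ha)).2)
          _ = (I.card : ℝ) * C := by rw [Finset.sum_const, nsmul_eq_mul]
          _ ≤ (n:ℝ)*C := mul_le_mul_of_nonneg_right hIcard hC0
      have hOge : -((n:ℝ)*C) ≤ ∑ a ∈ O, u' a := by
        calc -((n:ℝ)*C) ≤ -((O.card:ℝ)*C) := by nlinarith
          _ = ∑ _a ∈ O, (-C) := by rw [Finset.sum_const, nsmul_eq_mul]; ring
          _ ≤ ∑ a ∈ O, u' a := Finset.sum_le_sum (fun a ha => (hu'bd a (hOsub ha)).1)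
      by_cases hOtop : ∃ a ∈ O, u a = ⊤
      · obtain ⟨a₀, ha₀O, ha₀⟩ := hOtop
        have hesub : O.erase a₀ ⊆ arcs := (Finset.erase_subset _ _).trans hOsub
        have hecard : ((O.erase a₀).card : ℝ) ≤ (n:ℝ) :=
          Nat.cast_le.mpr (Finset.card_le_card hesub)
        have h2 : -((n:ℝ)*C) ≤ ∑ a ∈ O.erase a₀, u' a := by
          calc -((n:ℝ)*C) ≤ -(((O.erase a₀).card:ℝ)*C) := by nlinarith
            _ = ∑ _a ∈ O.erase a₀, (-C) := by rw [Finset.sum_const, nsmul_eq_mul]; ring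
            _ ≤ ∑ a ∈ O.erase a₀, u' a :=
              Finset.sum_le_sum (fun a ha => (hu'bd a (hesub ha)).1)
        have h1 : ∑ a ∈ O, u' a = M + ∑ a ∈ O.erase a₀, u' a := by
          rw [← Finset.add_sum_erase O u' ha₀O]
          congr 1
          simp only [hu']
          rw [if_pos ha₀]
        rw [h1]
        linarith
      · push_neg at hOtop
        by_cases hIbot : ∃ a ∈ I, l a = ⊥
        · obtain ⟨a₀, ha₀I, ha₀⟩ := hIbot
          have hesub : I.erase a₀ ⊆ arcs := (Finset.erase_subset _ _).trans hIsub
          have hecard : ((I.erase a₀).card : ℝ) ≤ (n:ℝ) :=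
            Nat.cast_le.mpr (Finset.card_le_card hesub)
          have h2 : ∑ a ∈ I.erase a₀, l' a ≤ (n:ℝ)*C := by
            calc ∑ a ∈ I.erase a₀, l' a ≤ ∑ _a ∈ I.erase a₀, C :=
                  Finset.sum_le_sum (fun a ha => (hl'bd a (hesub ha)).2)
              _ = ((I.erase a₀).card : ℝ) * C := by rw [Finset.sum_const, nsmul_eq_mul]
              _ ≤ (n:ℝ)*C := mul_le_mul_of_nonneg_right hecard hC0
          have h1 : ∑ a ∈ I, l' a = -M + ∑ a ∈ I.erase a₀, l' a := by
            rw [← Finset.add_sum_erase I l' ha₀I]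
            congr 1
            simp only [hl']
            rw [if_pos ha₀]
          rw [h1]
          linarith
        · push_neg at hIbot
          have hIeq : ∀ a ∈ I, ((l' a : ℝ) : EReal) = l a := by
            intro a ha
            simp only [hl']
            rw [if_neg (hIbot a ha)]
            exact EReal.coe_toReal (hl a (hIsub ha)) (hIbot a ha)
          have hOeq : ∀ a ∈ O, ((u' a : ℝ) : EReal) = u a := by
            intro a ha
            simp only [hu']
            rw [if_neg (hOtop a ha)]
            exact EReal.coe_toReal (hOtop a ha) (hu a (hOsub ha))
          have h := hcut W
          rw [← Finset.sum_congr rfl hIeq, ← Finset.sum_congr rfl hOeq,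
              ← ereal_coe_sum, ← ereal_coe_sum] at h
          exact_mod_cast h
    obtain ⟨y, hyb, hybal⟩ := real_hoffman arcs l' u' hl'u' hcut'
    refine ⟨y, fun a ha => ⟨?_, ?_⟩, hybal⟩
    · by_cases hb : l a = ⊥
      · rw [hb]; exact bot_le
      · have he : l a = ((l' a : ℝ) : EReal) := by
          simp only [hl']
          rw [if_neg hb]
          exact (EReal.coe_toReal (hl a ha) hb).symm
        rw [he]
        exact_mod_cast (hyb a ha).1
    · by_cases ht : u a = ⊤
      · rw [ht]; exact le_top
      · have he : u a = ((u' a : ℝ) : EReal) := by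
          simp only [hu']
          rw [if_neg ht]
          exact (EReal.coe_toReal ht (hu a ha)).symm
        rw [he]
        exact_mod_cast (hyb a ha).2
end

section
/- (Vande Vate.) For every acyclic digraph D = (V,A) with a source node s and a node t ≠ s, the s-t-path set polytope P^{s,t}(D) is the set of x ∈ ℝ^V satisfying x_s = 1, x_t = 1, x(T) ≤ x(succ(T)) for all T ⊆ V \ {t}, and x_v ≥ 0 for all v ∈ V. -/
open scoped Classical
open Finset

noncomputable section

/-- A directed cycle of the relation (digraph) `R`, given as the list of its
vertices: distinct vertices, consecutive ones joined by arcs, and an arc from the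
last vertex back to the first one. -/
def IsCycleList {α : Type*} (R : α → α → Prop) (c : List α) : Prop :=
  c.Nodup ∧ c.Chain' R ∧ ∃ a b, c.head? = some a ∧ c.getLast? = some b ∧ R b a

/-- A directed `s`-`t`-path of the digraph `R`, given as the list of its vertices. -/
def IsPathList {α : Type*} (R : α → α → Prop) (s t : α) (p : List α) : Prop :=
  p.Nodup ∧ p.Chain' R ∧ p.head? = some s ∧ p.getLast? = some t

/-- A digraph is acyclic if it has no directed cycle. -/
def AcyclicRel {α : Type*} (R : α → α → Prop) : Prop := ∀ c : List α, ¬ IsCycleList R c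

/-- The digraph `D̃` on the two copies `v^in = Sum.inl v` and `v^out = Sum.inr v` of
each node `v`, with arcs `(v^out, w^in)` for arcs `(v,w)` of `D`, arcs `(v^in, v^out)`
for all `v`, and the extra arc `(t^out, s^in)`. -/
def tildeArcs {V : Type*} (A : V → V → Prop) (s t : V) : (V ⊕ V) → (V ⊕ V) → Prop
  | .inl v, .inr w => v = w
  | .inr v, .inl w => A v w ∨ (v = t ∧ w = s)
  | _, _ => False

end

section Transportation
variable {α : Type*} [Fintype α]

/-- Reachability by alternating paths from a deficient supplier, used in the
proof of the transportation (fractional Hall) theorem. -/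
inductive TReach (E : α → α → Prop) (a : α → ℝ) (y : α → α → ℝ) : α → Prop
  | base (v : α) : (∑ w, y v w) < a v → TReach E a y v
  | step (v w v' : α) : TReach E a y v → E v w → 0 < y v' w → TReach E a y v'

lemma sum_ite_pair (ε : ℝ) (u c w : α) :
    ∑ w' : α, (if u = c ∧ w' = w then ε else 0) = if u = c then ε else 0 := by
  by_cases h : u = c <;> simp [h]

lemma sum_ite_pair' (ε : ℝ) (v w w' : α) :
    ∑ u : α, (if u = v ∧ w' = w then ε else 0) = if w' = w then ε else 0 := by
  by_cases h : w' = w <;> simp [h]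

theorem transportation (E : α → α → Prop) (a b : α → ℝ)
    (ha : ∀ v, 0 ≤ a v) (hb : ∀ w, 0 ≤ b w)
    (htot : ∑ v, a v = ∑ w, b w)
    (hall : ∀ S : Finset α, ∑ v ∈ S, a v ≤ ∑ w ∈ univ.filter (fun w => ∃ v ∈ S, E v w), b w) :
    ∃ y : α → α → ℝ, (∀ v w, 0 ≤ y v w) ∧ (∀ v w, y v w ≠ 0 → E v w) ∧
      (∀ v, ∑ w, y v w = a v) ∧ (∀ w, ∑ v, y v w = b w) := by
  classical
  set K : Set (α → α → ℝ) := {y | (∀ v w, 0 ≤ y v w) ∧ (∀ v w, ¬ E v w → y v w = 0) ∧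
    (∀ v, ∑ w, y v w ≤ a v) ∧ (∀ w, ∑ v, y v w ≤ b w)} with hKdef
  have hcont : ∀ (v w : α), Continuous fun y : α → α → ℝ => y v w :=
    fun v w => (continuous_apply w).comp (continuous_apply v)
  have hclosed : IsClosed K := by
    have h1 : IsClosed (⋂ (v : α), ⋂ (w : α), {y : α → α → ℝ | 0 ≤ y v w}) :=
      isClosed_iInter fun v => isClosed_iInter fun w =>
        isClosed_le continuous_const (hcont v w)
    have h2 : IsClosed (⋂ (v : α), ⋂ (w : α), {y : α → α → ℝ | ¬ E v w → y v w = 0}) := by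
      refine isClosed_iInter fun v => isClosed_iInter fun w => ?_
      by_cases hE : E v w
      · have he : {y : α → α → ℝ | ¬ E v w → y v w = 0} = Set.univ := by
          ext y; simp [hE]
        rw [he]; exact isClosed_univ
      · have he : {y : α → α → ℝ | ¬ E v w → y v w = 0} = {y | y v w = 0} := by
          ext y; simp [hE]
        rw [he]; exact isClosed_eq (hcont v w) continuous_const
    have hKeq : K = (⋂ (v : α), ⋂ (w : α), {y : α → α → ℝ | 0 ≤ y v w}) ∩
        ((⋂ (v : α), ⋂ (w : α), {y : α → α → ℝ | ¬ E v w → y v w = 0}) ∩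
        ((⋂ (v : α), {y : α → α → ℝ | ∑ w, y v w ≤ a v}) ∩
         (⋂ (w : α), {y : α → α → ℝ | ∑ v, y v w ≤ b w}))) := by
      ext y
      simp only [hKdef, Set.mem_setOf_eq, Set.mem_inter_iff, Set.mem_iInter]
      try tauto
    rw [hKeq]
    exact h1.inter (h2.inter
      ((isClosed_iInter fun v => isClosed_le
          (continuous_finset_sum _ fun w _ => hcont v w) continuous_const).inter
       (isClosed_iInter fun w => isClosed_le
          (continuous_finset_sum _ fun v _ => hcont v w) continuous_const)))
  have hbox : IsCompact (Set.univ.pi fun v : α => Set.univ.pi fun _ : α => Set.Icc (0:ℝ) (a v)) :=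
    isCompact_univ_pi fun v => isCompact_univ_pi fun _ => isCompact_Icc
  have hsub : K ⊆ Set.univ.pi fun v : α => Set.univ.pi fun _ : α => Set.Icc (0:ℝ) (a v) := by
    intro y hy
    rw [Set.mem_pi]
    intro v _
    rw [Set.mem_pi]
    intro w _
    refine ⟨hy.1 v w, ?_⟩
    calc y v w ≤ ∑ w', y v w' := Finset.single_le_sum (fun w' _ => hy.1 v w') (mem_univ w)
    _ ≤ a v := hy.2.2.1 v
  have hKcomp : IsCompact K := hbox.of_isClosed_subset hclosed hsub
  have hKne : K.Nonempty :=
    ⟨fun _ _ => 0, fun v w => le_refl 0, fun v w _ => rfl,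
      fun v => by simpa using ha v, fun w => by simpa using hb w⟩
  have hFcont : Continuous fun y : α → α → ℝ => ∑ v, ∑ w, y v w :=
    continuous_finset_sum _ fun v _ => continuous_finset_sum _ fun w _ => hcont v w
  obtain ⟨y, hyK, hymax⟩ := hKcomp.exists_isMaxOn hKne hFcont.continuousOn
  obtain ⟨hy0, hyE, hyrow, hycol⟩ := hyK
  have hyE' : ∀ v w, y v w ≠ 0 → E v w := fun v w h => by
    by_contra hE; exact h (hyE v w hE)
  -- key augmenting lemma
  have key : ∀ v, TReach E a y v → ∀ η > 0, ∃ ε0 > 0, ∀ ε, 0 < ε → ε ≤ ε0 →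
      ∃ y' , y' ∈ K ∧ (∀ w, ∑ u, y' u w = ∑ u, y u w) ∧ (∑ w, y' v w) + ε ≤ a v ∧
        (∀ u w, y u w ≤ y' u w + η) := by
    intro v hv
    induction hv with
    | base v hdef =>
      intro η hη
      refine ⟨a v - ∑ w, y v w, by linarith, fun ε hε hε0 => ⟨y, ?_, fun _ => rfl, by linarith,
        fun u w => by linarith⟩⟩
      exact ⟨hy0, hyE, hyrow, hycol⟩
    | step v w v' hv hE hpos ih =>
      rcases eq_or_ne v v' with rfl | hvv
      · exact ih
      intro η hη
      obtain ⟨ε0, hε0, H⟩ := ih (min (η/2) (y v' w / 4)) (by positivity)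
      refine ⟨min ε0 (min (η/2) (y v' w / 4)), by positivity, ?_⟩
      intro ε hε hεle
      obtain ⟨y'', hK'', hcol'', hrow'', hlb''⟩ := H ε hε (hεle.trans (min_le_left _ _))
      obtain ⟨h0'', hE'', hr'', hc''⟩ := hK''
      have hεη : ε ≤ η/2 := hεle.trans ((min_le_right _ _).trans (min_le_left _ _))
      have hεy : ε ≤ y v' w / 4 := hεle.trans ((min_le_right _ _).trans (min_le_right _ _))
      set y' : α → α → ℝ := fun u w' =>
        y'' u w' + (if u = v ∧ w' = w then ε else 0) - (if u = v' ∧ w' = w then ε else 0)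
        with hy'def
      have hpt : ∀ u w', y' u w' =
          y'' u w' + (if u = v ∧ w' = w then ε else 0) - (if u = v' ∧ w' = w then ε else 0) :=
        fun u w' => rfl
      have hrowsum : ∀ u, ∑ w', y' u w' =
          (∑ w', y'' u w') + (if u = v then ε else 0) - (if u = v' then ε else 0) := by
        intro u
        simp only [hpt]
        rw [Finset.sum_sub_distrib, Finset.sum_add_distrib, sum_ite_pair, sum_ite_pair]
      have hcolsum : ∀ w', ∑ u, y' u w' = ∑ u, y'' u w' := by
        intro w'
        simp only [hpt]
        rw [Finset.sum_sub_distrib, Finset.sum_add_distrib, sum_ite_pair', sum_ite_pair']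
        ring
      have hlbv'w : y v' w ≤ y'' v' w + min (η/2) (y v' w / 4) := hlb'' v' w
      have hminy : min (η/2) (y v' w / 4) ≤ y v' w / 4 := min_le_right _ _
      have hminη : min (η/2) (y v' w / 4) ≤ η/2 := min_le_left _ _
      refine ⟨y', ⟨?_, ?_, ?_, ?_⟩, ?_, ?_, ?_⟩
      · -- nonneg
        intro u w'
        rw [hpt u w']
        by_cases h2 : u = v' ∧ w' = w
        · have h1 : ¬ (u = v ∧ w' = w) := fun h => hvv (by rw [← h.1, h2.1])
          rw [if_neg h1, if_pos h2]
          obtain ⟨rfl, rfl⟩ := h2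
          linarith
        · rw [if_neg h2]
          by_cases h1 : u = v ∧ w' = w
          · rw [if_pos h1]; linarith [h0'' u w']
          · rw [if_neg h1]; linarith [h0'' u w']
      · -- support
        intro u w' hnE
        rw [hpt u w']
        by_cases h1 : u = v ∧ w' = w
        · exact absurd (h1.1 ▸ h1.2 ▸ hE) hnE
        by_cases h2 : u = v' ∧ w' = w
        · obtain ⟨rfl, rfl⟩ := h2
          exact absurd (hyE' u w' (ne_of_gt hpos)) hnE
        · rw [if_neg h1, if_neg h2, hE'' u w' hnE]; ring
      · -- row sums ≤ a
        intro u
        rw [hrowsum u]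
        by_cases h1 : u = v
        · subst h1
          rw [if_pos rfl, if_neg hvv]
          linarith
        · rw [if_neg h1]
          by_cases h2 : u = v'
          · rw [if_pos h2]; linarith [hr'' u]
          · rw [if_neg h2]; linarith [hr'' u]
      · -- col sums ≤ b
        intro w'
        rw [hcolsum w', hcol'' w']
        exact hycol w'
      · -- col sums preserved
        intro w'
        rw [hcolsum w', hcol'' w']
      · -- deficiency at v'
        rw [hrowsum v', if_neg (Ne.symm hvv), if_pos rfl]
        linarith [hr'' v']
      · -- entrywise lower bound
        intro u w'
        rw [hpt u w']
        by_cases h2 : u = v' ∧ w' = w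
        · have h1 : ¬ (u = v ∧ w' = w) := fun h => hvv (by rw [← h.1, h2.1])
          rw [if_neg h1, if_pos h2]
          obtain ⟨rfl, rfl⟩ := h2
          linarith [hlb'' u w']
        · rw [if_neg h2]
          by_cases h1 : u = v ∧ w' = w
          · rw [if_pos h1]; linarith [hlb'' u w', hε.le]
          · rw [if_neg h1]; linarith [hlb'' u w']
  -- tight columns adjacent to reachable rows
  have colA : ∀ v w, TReach E a y v → E v w → ∑ u, y u w = b w := by
    intro v w hv hEvw
    by_contra hne
    have hlt : ∑ u, y u w < b w := lt_of_le_of_ne (hycol w) hne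
    obtain ⟨ε0, hε0, H⟩ := key v hv 1 one_pos
    set ε : ℝ := min ε0 (b w - ∑ u, y u w) with hεdef
    have hεpos : 0 < ε := lt_min hε0 (by linarith)
    have hεb : ε ≤ b w - ∑ u, y u w := min_le_right _ _
    obtain ⟨y', hK', hcol', hrow', _⟩ := H ε hεpos (min_le_left _ _)
    obtain ⟨h0', hE', hr', hc'⟩ := hK'
    set y2 : α → α → ℝ := fun u w' => y' u w' + (if u = v ∧ w' = w then ε else 0) with hy2def
    have hpt2 : ∀ u w', y2 u w' = y' u w' + (if u = v ∧ w' = w then ε else 0) := fun _ _ => rfl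
    have hrow2 : ∀ u, ∑ w', y2 u w' = (∑ w', y' u w') + (if u = v then ε else 0) := by
      intro u
      simp only [hpt2]
      rw [Finset.sum_add_distrib, sum_ite_pair]
    have hcol2 : ∀ w', ∑ u, y2 u w' = (∑ u, y' u w') + (if w' = w then ε else 0) := by
      intro w'
      simp only [hpt2]
      rw [Finset.sum_add_distrib, sum_ite_pair']
    have hy2K : y2 ∈ K := by
      refine ⟨?_, ?_, ?_, ?_⟩
      · intro u w'
        rw [hpt2 u w']
        by_cases h1 : u = v ∧ w' = w
        · rw [if_pos h1]; linarith [h0' u w']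
        · rw [if_neg h1]; linarith [h0' u w']
      · intro u w' hnE
        rw [hpt2 u w']
        by_cases h1 : u = v ∧ w' = w
        · exact absurd (h1.1 ▸ h1.2 ▸ hEvw) hnE
        · rw [if_neg h1, hE' u w' hnE]; ring
      · intro u
        rw [hrow2 u]
        by_cases h1 : u = v
        · subst h1; rw [if_pos rfl]; linarith
        · rw [if_neg h1]; linarith [hr' u]
      · intro w'
        rw [hcol2 w', hcol' w']
        by_cases h1 : w' = w
        · subst h1; rw [if_pos rfl]; linarith
        · rw [if_neg h1]; linarith [hycol w']
    have hF2 : ∑ u, ∑ w', y2 u w' = (∑ u, ∑ w', y' u w') + ε := by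
      rw [Finset.sum_congr rfl fun u (_ : u ∈ univ) => hrow2 u, Finset.sum_add_distrib]
      simp
    have hF' : ∑ u, ∑ w', y' u w' = ∑ u, ∑ w', y u w' := by
      rw [Finset.sum_comm (f := fun u w' => y' u w'), Finset.sum_comm (f := fun u w' => y u w')]
      exact Finset.sum_congr rfl fun w' _ => hcol' w'
    have hle := hymax hy2K
    simp only [Set.mem_setOf_eq] at hle
    rw [hF2, hF'] at hle
    linarith
  -- rows are tight
  have rowtight : ∀ v, ∑ w, y v w = a v := by
    by_contra h
    push_neg at h
    obtain ⟨v0, hv0⟩ := h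
    have hv0' : ∑ w, y v0 w < a v0 := lt_of_le_of_ne (hyrow v0) hv0
    set S : Finset α := univ.filter (fun v => TReach E a y v) with hSdef
    have hv0S : v0 ∈ S := by
      simp only [hSdef, mem_filter, mem_univ, true_and]
      exact TReach.base v0 hv0'
    set NS : Finset α := univ.filter (fun w => ∃ v ∈ S, E v w) with hNSdef
    have h1 : ∑ v ∈ S, ∑ w, y v w < ∑ v ∈ S, a v :=
      Finset.sum_lt_sum (fun v _ => hyrow v) ⟨v0, hv0S, hv0'⟩
    have h2 : ∀ v ∈ S, ∑ w, y v w = ∑ w ∈ NS, y v w := by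
      intro v hv
      symm
      apply Finset.sum_subset (Finset.subset_univ NS)
      intro w _ hw
      by_contra hne
      refine hw ?_
      simp only [hNSdef, mem_filter, mem_univ, true_and]
      exact ⟨v, hv, hyE' v w hne⟩
    have h4 : ∀ w ∈ NS, ∑ v ∈ S, y v w = ∑ v, y v w := by
      intro w hw
      apply Finset.sum_subset (Finset.subset_univ S)
      intro v _ hv
      by_contra hne
      have hpos : 0 < y v w := lt_of_le_of_ne (hy0 v w) (Ne.symm hne)
      simp only [hNSdef, mem_filter, mem_univ, true_and] at hw
      obtain ⟨v1, hv1S, hv1E⟩ := hw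
      simp only [hSdef, mem_filter, mem_univ, true_and] at hv1S
      refine hv ?_
      simp only [hSdef, mem_filter, mem_univ, true_and]
      exact TReach.step v1 w v hv1S hv1E hpos
    have h5 : ∀ w ∈ NS, ∑ v, y v w = b w := by
      intro w hw
      simp only [hNSdef, mem_filter, mem_univ, true_and] at hw
      obtain ⟨v1, hv1S, hv1E⟩ := hw
      simp only [hSdef, mem_filter, mem_univ, true_and] at hv1S
      exact colA v1 w hv1S hv1E
    have hchain : ∑ w ∈ NS, b w < ∑ v ∈ S, a v := by
      calc ∑ w ∈ NS, b w = ∑ w ∈ NS, ∑ v, y v w :=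
            Finset.sum_congr rfl fun w hw => (h5 w hw).symm
        _ = ∑ w ∈ NS, ∑ v ∈ S, y v w := Finset.sum_congr rfl fun w hw => (h4 w hw).symm
        _ = ∑ v ∈ S, ∑ w ∈ NS, y v w := Finset.sum_comm
        _ = ∑ v ∈ S, ∑ w, y v w := Finset.sum_congr rfl fun v hv => (h2 v hv).symm
        _ < ∑ v ∈ S, a v := h1
    exact absurd (hall S) (not_le.mpr hchain)
  have hFtot : ∑ w, ∑ v, y v w = ∑ w, b w := by
    have h6 : ∑ v, ∑ w, y v w = ∑ v, a v := Finset.sum_congr rfl fun v _ => rowtight v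
    rw [← htot, ← h6, Finset.sum_comm]
  have coltight : ∀ w, ∑ v, y v w = b w := by
    have h7 := (Finset.sum_eq_sum_iff_of_le (fun w (_ : w ∈ univ) => hycol w)).mp hFtot
    exact fun w => h7 w (mem_univ w)
  exact ⟨y, hy0, hyE', rowtight, coltight⟩

end Transportation

section Walk
variable {V : Type*} [Fintype V]

lemma walk_to_t (A : V → V → Prop) (s t : V) (hacyc : AcyclicRel A)
    (y : V → V → ℝ) (hnn : ∀ v w, 0 ≤ y v w)
    (hsupp : ∀ v w, y v w ≠ 0 → (A v w ∨ (v = t ∧ w = s)))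
    (hcons : ∀ v, ∑ w, y v w = ∑ w, y w v)
    (v0 : V) (h0 : v0 = t ∨ 0 < ∑ w, y v0 w) :
    ∃ (n₀ : ℕ) (g : ℕ → V), g 0 = v0 ∧ g n₀ = t ∧
      (∀ i j, i ≤ n₀ → j ≤ n₀ → g i = g j → i = j) ∧
      (∀ k, k < n₀ → A (g k) (g (k+1)) ∧ 0 < y (g k) (g (k+1))) := by
  classical
  have hex : ∀ v, 0 < ∑ w, y v w → ∃ w, 0 < y v w := by
    intro v hv
    by_contra h
    push_neg at h
    have hz : ∑ w, y v w = 0 := Finset.sum_eq_zero fun w _ => le_antisymm (h w) (hnn v w)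
    rw [hz] at hv; exact lt_irrefl 0 hv
  set g : ℕ → V := fun n =>
    Nat.rec v0 (fun _ v => if h : v ≠ t ∧ ∃ w, 0 < y v w then h.2.choose else v) n with hgdef
  have hg0 : g 0 = v0 := rfl
  have hgsucc : ∀ n, g (n+1) =
      if h : g n ≠ t ∧ ∃ w, 0 < y (g n) w then h.2.choose else g n := fun n => rfl
  have hInv : ∀ n, g n = t ∨ 0 < ∑ w, y (g n) w := by
    intro n
    induction n with
    | zero => exact h0
    | succ n ih =>
      by_cases hgn : g n = t
      · left
        rw [hgsucc n, dif_neg (by simp [hgn])]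
        exact hgn
      · rcases ih with h | h
        · exact absurd h hgn
        · have hc : g n ≠ t ∧ ∃ w, 0 < y (g n) w := ⟨hgn, hex _ h⟩
          have hgn1 : g (n+1) = hc.2.choose := by rw [hgsucc n, dif_pos hc]
          right
          rw [hcons (g (n+1))]
          have hp : 0 < y (g n) (g (n+1)) := by rw [hgn1]; exact hc.2.choose_spec
          calc (0:ℝ) < y (g n) (g (n+1)) := hp
            _ ≤ ∑ w, y w (g (n+1)) := Finset.single_le_sum (fun w _ => hnn w _) (mem_univ _)
  have harc : ∀ n, g n ≠ t → A (g n) (g (n+1)) ∧ 0 < y (g n) (g (n+1)) := by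
    intro n hgn
    rcases hInv n with h | h
    · exact absurd h hgn
    have hc : g n ≠ t ∧ ∃ w, 0 < y (g n) w := ⟨hgn, hex _ h⟩
    have hgn1 : g (n+1) = hc.2.choose := by rw [hgsucc n, dif_pos hc]
    have hp : 0 < y (g n) (g (n+1)) := by rw [hgn1]; exact hc.2.choose_spec
    refine ⟨?_, hp⟩
    rcases hsupp _ _ (ne_of_gt hp) with h | h
    · exact h
    · exact absurd h.1 hgn
  -- no repetition before reaching t
  have hnocyc : ∀ i j, i < j → (∀ k, k < j → g k ≠ t) → g i ≠ g j := by
    intro i j hij hnt heq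
    have hQ : ∃ j', (∃ i' < j', g i' = g j') := ⟨j, i, hij, heq⟩
    set j₀ := Nat.find hQ with hj₀def
    obtain ⟨i₀, hi₀lt, hi₀eq⟩ := Nat.find_spec hQ
    rw [← hj₀def] at hi₀lt hi₀eq
    have hj₀le : j₀ ≤ j := Nat.find_min' hQ ⟨i, hij, heq⟩
    have hinj : ∀ a b, a < b → b < j₀ → g a ≠ g b := by
      intro a b hab hb heq'
      exact Nat.find_min hQ hb ⟨a, hab, heq'⟩
    have hlt : ∀ k, i₀ + k < j₀ → g (i₀ + k) ≠ t := by
      intro k hk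
      exact hnt _ (lt_of_lt_of_le hk hj₀le)
    set m := j₀ - i₀ - 1 with hmdef
    have hm : j₀ - i₀ = m + 1 := by omega
    set c : List V := (List.range (m+1)).map (fun k => g (i₀ + k)) with hcdef
    refine hacyc c ⟨?_, ?_, g i₀, g (i₀ + m), ?_, ?_, ?_⟩
    · refine List.Nodup.map_on ?_ List.nodup_range
      intro x hx y' hy' hxy
      rw [List.mem_range] at hx hy'
      by_contra hne
      rcases lt_or_gt_of_ne hne with h | h
      · exact hinj (i₀ + x) (i₀ + y') (by omega) (by omega) hxy
      · exact hinj (i₀ + y') (i₀ + x) (by omega) (by omega) hxy.symm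
    · unfold List.Chain'; rw [hcdef, List.isChain_map]
      rw [show m + 1 = Nat.succ m from rfl, List.isChain_range_succ]
      intro k hk
      have := harc (i₀ + k) (hlt k (by omega))
      have harr : i₀ + (k+1) = i₀ + k + 1 := by omega
      rw [harr]
      exact this.1
    · rw [hcdef]
      have h1 : (m+1) > 0 := Nat.succ_pos m
      rw [List.head?_eq_getElem?]
      rw [List.getElem?_map]
      rw [List.getElem?_range h1]
      simp
    · rw [hcdef, List.getLast?_eq_getElem?]
      simp only [List.length_map, List.length_range]
      rw [List.getElem?_map, List.getElem?_range (by omega : m + 1 - 1 < m + 1)]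
      simp
    · have h2 : i₀ + m = j₀ - 1 := by omega
      have h3 : g (j₀ - 1) ≠ t := hnt _ (by omega)
      have h5 := (harc (j₀ - 1) h3).1
      rw [show j₀ - 1 + 1 = j₀ by omega] at h5
      rw [h2, hi₀eq]
      exact h5
  -- the walk reaches t
  have hreach : ∃ n, g n = t := by
    by_contra h
    push_neg at h
    have hinj : Function.Injective g := by
      intro i j hij
      by_contra hne
      rcases lt_or_gt_of_ne hne with hlt | hlt
      · exact hnocyc i j hlt (fun k _ => h k) hij
      · exact hnocyc j i hlt (fun k _ => h k) hij.symm
    obtain ⟨i, j, hne, heq⟩ := Finite.exists_ne_map_eq_of_infinite g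
    exact hne (hinj heq)
  set n₀ := Nat.find hreach with hn₀def
  have hgn₀ : g n₀ = t := Nat.find_spec hreach
  have hmin : ∀ k, k < n₀ → g k ≠ t := fun k hk => Nat.find_min hreach hk
  refine ⟨n₀, g, hg0, hgn₀, ?_, fun k hk => harc k (hmin k hk)⟩
  intro i j hi hj heq
  by_contra hne
  rcases lt_or_gt_of_ne hne with hlt | hlt
  · rcases eq_or_lt_of_le hj with rfl | hj'
    · exact hmin i hlt (heq.trans hgn₀)
    · exact hnocyc i j hlt (fun k hk => hmin k (lt_trans hk hj')) heq
  · rcases eq_or_lt_of_le hi with rfl | hi'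
    · exact hmin j hlt (heq.symm.trans hgn₀)
    · exact hnocyc j i hlt (fun k hk => hmin k (lt_trans hk hi')) heq.symm

end Walk

section Decomp
variable {V : Type*} [Fintype V]

lemma decomp_step (A : V → V → Prop) (s t : V) (hts : t ≠ s) (hacyc : AcyclicRel A) :
    ∀ (N : ℕ) (y : V → V → ℝ),
    ((univ ×ˢ univ).filter (fun q : V × V => y q.1 q.2 ≠ 0)).card ≤ N →
    (∀ v w, 0 ≤ y v w) →
    (∀ v w, y v w ≠ 0 → (A v w ∨ (v = t ∧ w = s))) →
    (∀ v, ∑ w, y v w = ∑ w, y w v) →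
    y t s = 1 →
    (∀ w, w ≠ s → y t w = 0) →
    (fun v => ∑ w, y v w) ∈ convexHull ℝ {x : V → ℝ | ∃ p : List V, IsPathList A s t p ∧
        x = fun v => if v ∈ p then 1 else 0} := by
  intro N
  induction N with
  | zero =>
    intro y hcard hnn hsupp hcons hts1 htz
    exfalso
    have hmem : ((t, s) : V × V) ∈
        (univ ×ˢ univ).filter (fun q : V × V => y q.1 q.2 ≠ 0) := by
      simp [hts1]
    have := Finset.card_pos.mpr ⟨_, hmem⟩
    omega
  | succ N ih =>
    intro y hcard hnn hsupp hcons hts1 htz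
    -- find a path from s to t in the support of y
    have hout : 0 < ∑ w, y s w := by
      rw [hcons s]
      calc (0:ℝ) < 1 := one_pos
        _ = y t s := hts1.symm
        _ ≤ ∑ w, y w s := Finset.single_le_sum (fun w _ => hnn w s) (mem_univ t)
    obtain ⟨n₀, g, hg0, hgn₀, hinj, harc⟩ :=
      walk_to_t A s t hacyc y hnn hsupp hcons s (Or.inr hout)
    have hn₀pos : 0 < n₀ := by
      rcases Nat.eq_zero_or_pos n₀ with h | h
      · exact absurd (by rw [← hg0, ← h, hgn₀]) hts
      · exact h
    set arcs : Finset (V × V) :=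
      insert (t, s) ((range n₀).image fun k => (g k, g (k+1))) with harcsdef
    set nodes : Finset V := (range (n₀+1)).image g with hnodesdef
    set p : List V := (List.range (n₀+1)).map g with hpdef
    have hts_mem : ((t,s) : V × V) ∈ arcs := mem_insert_self _ _
    have harcsne : arcs.Nonempty := ⟨_, hts_mem⟩
    have hnodes_iff : ∀ v, v ∈ nodes ↔ ∃ k, k ≤ n₀ ∧ g k = v := by
      intro v
      simp only [hnodesdef, mem_image, mem_range, Nat.lt_succ_iff]
      try tauto
    have htn : t ∈ nodes := (hnodes_iff t).mpr ⟨n₀, le_refl _, hgn₀⟩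
    have hsn : s ∈ nodes := (hnodes_iff s).mpr ⟨0, Nat.zero_le _, hg0⟩
    have hmemp : ∀ v, v ∈ p ↔ v ∈ nodes := by
      intro v
      simp only [hpdef, hnodesdef, List.mem_map, List.mem_range, mem_image, mem_range]
      try tauto
    -- membership characterization of arcs
    have harcs_iff : ∀ q : V × V, q ∈ arcs ↔
        (q = (t, s) ∨ ∃ k, k < n₀ ∧ q = (g k, g (k+1))) := by
      intro q
      simp only [harcsdef, mem_insert, mem_image, mem_range]
      constructor
      · rintro (h | ⟨k, hk, rfl⟩)
        · exact Or.inl h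
        · exact Or.inr ⟨k, hk, rfl⟩
      · rintro (h | ⟨k, hk, rfl⟩)
        · exact Or.inl h
        · exact Or.inr ⟨k, hk, rfl⟩
    have hgk_ne_t : ∀ k, k < n₀ → g k ≠ t := by
      intro k hk heq
      have := hinj k n₀ (le_of_lt hk) (le_refl _) (heq.trans hgn₀.symm)
      omega
    have hout_t : ∀ w, ((t, w) ∈ arcs ↔ w = s) := by
      intro w
      rw [harcs_iff]
      constructor
      · rintro (h | ⟨k, hk, h⟩)
        · exact (Prod.mk.injEq _ _ _ _ ▸ h).2
        · exfalso
          exact hgk_ne_t k hk (congrArg Prod.fst h).symm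
      · rintro rfl; exact Or.inl rfl
    have hpos_arcs : ∀ q ∈ arcs, 0 < y q.1 q.2 := by
      intro q hq
      rcases (harcs_iff q).mp hq with rfl | ⟨k, hk, rfl⟩
      · rw [hts1]; exact one_pos
      · exact (harc k hk).2
    -- row and column counts of the arc indicator
    have hrowcount : ∀ v, ∑ w, (if (v, w) ∈ arcs then (1:ℝ) else 0)
        = if v ∈ nodes then 1 else 0 := by
      intro v
      rw [Finset.sum_boole]
      by_cases hv : v ∈ nodes
      · rw [if_pos hv]
        obtain ⟨k, hk, rfl⟩ := (hnodes_iff v).mp hv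
        by_cases hvt : g k = t
        · have hfil : univ.filter (fun w => (g k, w) ∈ arcs) = {s} := by
            ext w
            simp only [mem_filter, mem_univ, true_and, mem_singleton, hvt, hout_t]
          rw [hfil]; simp
        · have hkn : k < n₀ := lt_of_le_of_ne hk (fun h => hvt (h ▸ hgn₀))
          have hfil : univ.filter (fun w => (g k, w) ∈ arcs) = {g (k+1)} := by
            ext w
            simp only [mem_filter, mem_univ, true_and, mem_singleton]
            rw [harcs_iff]
            constructor
            · rintro (h | ⟨k', hk', h⟩)
              · exact absurd (congrArg Prod.fst h) hvt
              · have : k' = k :=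
                  hinj k' k (le_of_lt hk') hk (congrArg Prod.fst h).symm
                subst this
                exact (congrArg Prod.snd h)
            · rintro rfl
              exact Or.inr ⟨k, hkn, rfl⟩
          rw [hfil]; simp
      · rw [if_neg hv]
        have hfil : univ.filter (fun w => (v, w) ∈ arcs) = ∅ := by
          ext w
          simp only [mem_filter, mem_univ, true_and, notMem_empty, iff_false]
          intro h
          rcases (harcs_iff _).mp h with h | ⟨k, hk, h⟩
          · have h1 : v = t := congrArg Prod.fst h
            exact hv (h1 ▸ htn)
          · refine hv ?_
            rw [hnodes_iff]
            exact ⟨k, le_of_lt hk, (congrArg Prod.fst h).symm⟩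
        rw [hfil]; simp
    have hcolcount : ∀ w, ∑ v, (if (v, w) ∈ arcs then (1:ℝ) else 0)
        = if w ∈ nodes then 1 else 0 := by
      intro w
      rw [Finset.sum_boole]
      by_cases hw : w ∈ nodes
      · rw [if_pos hw]
        obtain ⟨j, hj, rfl⟩ := (hnodes_iff w).mp hw
        rcases Nat.eq_zero_or_pos j with rfl | hjpos
        · -- w = g 0 = s
          have hfil : univ.filter (fun v => (v, g 0) ∈ arcs) = {t} := by
            ext v
            simp only [mem_filter, mem_univ, true_and, mem_singleton]
            rw [harcs_iff]
            constructor
            · rintro (h | ⟨k, hk, h⟩)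
              · exact (congrArg Prod.fst h)
              · exfalso
                have h2 : g (k+1) = g 0 := (congrArg Prod.snd h).symm
                have := hinj (k+1) 0 (by omega) (Nat.zero_le _) h2
                omega
            · rintro rfl
              rw [hg0]
              exact Or.inl rfl
          rw [hfil]; simp
        · -- w = g j, j ≥ 1
          have hjs : g j ≠ s := by
            intro h
            have := hinj j 0 hj (Nat.zero_le _) (h.trans hg0.symm)
            omega
          have hfil : univ.filter (fun v => (v, g j) ∈ arcs) = {g (j-1)} := by
            ext v
            simp only [mem_filter, mem_univ, true_and, mem_singleton]
            rw [harcs_iff]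
            constructor
            · rintro (h | ⟨k, hk, h⟩)
              · exact absurd (congrArg Prod.snd h) hjs
              · have h2 : g (k+1) = g j := (congrArg Prod.snd h).symm
                have h3 : k + 1 = j := hinj (k+1) j (by omega) hj h2
                have h4 : k = j - 1 := by omega
                rw [← h4]
                exact (congrArg Prod.fst h)
            · rintro rfl
              refine Or.inr ⟨j - 1, by omega, ?_⟩
              rw [show j - 1 + 1 = j by omega]
          rw [hfil]; simp
      · rw [if_neg hw]
        have hws : w ≠ s := fun h => hw (h ▸ hsn)
        have hfil : univ.filter (fun v => (v, w) ∈ arcs) = ∅ := by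
          ext v
          simp only [mem_filter, mem_univ, true_and, notMem_empty, iff_false]
          intro h
          rcases (harcs_iff _).mp h with h | ⟨k, hk, h⟩
          · exact hws (congrArg Prod.snd h)
          · refine hw ?_
            rw [hnodes_iff]
            exact ⟨k+1, by omega, (congrArg Prod.snd h).symm⟩
        rw [hfil]; simp
    -- the path is a valid s-t path
    have hpath : IsPathList A s t p := by
      refine ⟨?_, ?_, ?_, ?_⟩
      · refine List.Nodup.map_on ?_ List.nodup_range
        intro x hx y' hy' hxy
        rw [List.mem_range, Nat.lt_succ_iff] at hx hy'
        exact hinj x y' hx hy' hxy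
      · unfold List.Chain'; rw [hpdef, List.isChain_map]
        rw [show n₀ + 1 = Nat.succ n₀ from rfl, List.isChain_range_succ]
        intro m hm
        exact (harc m hm).1
      · rw [hpdef, List.head?_eq_getElem?, List.getElem?_map,
          List.getElem?_range (Nat.succ_pos n₀)]
        simp [hg0]
      · rw [hpdef, List.getLast?_eq_getElem?]
        simp only [List.length_map, List.length_range]
        rw [List.getElem?_map, List.getElem?_range (by omega : n₀ + 1 - 1 < n₀ + 1)]
        simp only [Nat.add_sub_cancel, Option.map_some]
        rw [hgn₀]
    -- subtract δ times the cycle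
    set δ : ℝ := arcs.inf' harcsne (fun q => y q.1 q.2) with hδdef
    have hδpos : 0 < δ := (Finset.lt_inf'_iff harcsne).mpr (fun q hq => hpos_arcs q hq)
    have hδle : ∀ q ∈ arcs, δ ≤ y q.1 q.2 := fun q hq => Finset.inf'_le _ hq
    have hδ1 : δ ≤ 1 := by
      have := hδle _ hts_mem
      rwa [hts1] at this
    set y' : V → V → ℝ := fun v w => y v w - δ * (if (v, w) ∈ arcs then 1 else 0) with hy'def
    have hpt : ∀ v w, y' v w = y v w - δ * (if (v, w) ∈ arcs then 1 else 0) := fun _ _ => rfl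
    have hrow' : ∀ v, ∑ w, y' v w = (∑ w, y v w) - δ * (if v ∈ nodes then 1 else 0) := by
      intro v
      simp only [hpt]
      rw [Finset.sum_sub_distrib, ← Finset.mul_sum, hrowcount]
    have hcol' : ∀ w, ∑ v, y' v w = (∑ v, y v w) - δ * (if w ∈ nodes then 1 else 0) := by
      intro w
      simp only [hpt]
      rw [Finset.sum_sub_distrib, ← Finset.mul_sum, hcolcount]
    have hnn' : ∀ v w, 0 ≤ y' v w := by
      intro v w
      rw [hpt]
      by_cases h : (v, w) ∈ arcs
      · rw [if_pos h, mul_one]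
        have := hδle _ h
        simp only at this
        linarith
      · rw [if_neg h, mul_zero]
        linarith [hnn v w]
    have hsupp' : ∀ v w, y' v w ≠ 0 → (A v w ∨ (v = t ∧ w = s)) := by
      intro v w h
      by_cases hq : (v, w) ∈ arcs
      · rcases (harcs_iff _).mp hq with hh | ⟨k, hk, hh⟩
        · right
          exact ⟨(congrArg Prod.fst hh), (congrArg Prod.snd hh)⟩
        · left
          have h1 : v = g k := congrArg Prod.fst hh
          have h2 : w = g (k+1) := congrArg Prod.snd hh
          rw [h1, h2]
          exact (harc k hk).1
      · rw [hpt, if_neg hq, mul_zero, sub_zero] at h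
        exact hsupp v w h
    have hcons' : ∀ v, ∑ w, y' v w = ∑ w, y' w v := by
      intro v
      rw [hrow' v, hcol' v, hcons v]
    have hts1' : y' t s = 1 - δ := by
      rw [hpt, if_pos hts_mem, mul_one, hts1]
    have htz' : ∀ w, w ≠ s → y' t w = 0 := by
      intro w hw
      rw [hpt, if_neg (fun h => hw ((hout_t w).mp h)), mul_zero, sub_zero]
      exact htz w hw
    have hsuppsub : ∀ q : V × V, y' q.1 q.2 ≠ 0 → y q.1 q.2 ≠ 0 := by
      intro q h
      by_contra hz
      have : (q.1, q.2) ∉ arcs := by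
        intro hq
        have := hpos_arcs _ hq
        simp only at this
        rw [hz] at this
        exact lt_irrefl 0 this
      rw [hpt, hz, if_neg (by simpa using this), mul_zero, sub_zero] at h
      exact h rfl
    rcases eq_or_lt_of_le hδ1 with hδeq | hδlt
    · -- δ = 1 : y' is the zero circulation, x is exactly the path indicator
      have hzero : ∀ v, ∑ w, y' v w = 0 := by
        intro v
        by_contra hne
        have hvpos : 0 < ∑ w, y' v w :=
          lt_of_le_of_ne (Finset.sum_nonneg fun w _ => hnn' v w) (Ne.symm hne)
        obtain ⟨n₁, g₁, hg₁0, hg₁n, hinj₁, harc₁⟩ :=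
          walk_to_t A s t hacyc y' hnn' hsupp' hcons' v (Or.inr hvpos)
        have hrowt : ∑ w, y' t w = 0 := by
          rw [Finset.sum_eq_single s]
          · rw [hts1', ← hδeq]; ring
          · intro w _ hw
            exact htz' w hw
          · intro h
            exact absurd (mem_univ s) h
        rcases Nat.eq_zero_or_pos n₁ with h | h
        · rw [← hg₁0, ← h, hg₁n] at hvpos
          rw [hrowt] at hvpos
          exact lt_irrefl 0 hvpos
        · have harct := harc₁ (n₁ - 1) (by omega)
          rw [show n₁ - 1 + 1 = n₁ by omega, hg₁n] at harct
          have hint : 0 < ∑ w, y' w t :=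
            lt_of_lt_of_le harct.2
              (Finset.single_le_sum (fun w _ => hnn' w t) (mem_univ _))
          rw [← hcons' t, hrowt] at hint
          exact lt_irrefl 0 hint
      have hxeq : (fun v => ∑ w, y v w) = fun v => if v ∈ p then (1:ℝ) else 0 := by
        funext v
        have h1 : ∑ w, y v w = (∑ w, y' v w) + δ * (if v ∈ nodes then 1 else 0) := by
          rw [hrow' v]; ring
        rw [h1, hzero v, hδeq, zero_add, one_mul]
        by_cases h : v ∈ nodes
        · rw [if_pos h, if_pos ((hmemp v).mpr h)]
        · rw [if_neg h, if_neg (fun hh => h ((hmemp v).mp hh))]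
      rw [hxeq]
      have hχ : (fun v => if v ∈ p then (1:ℝ) else 0) ∈ {x : V → ℝ |
          ∃ p' : List V, IsPathList A s t p' ∧ x = fun v => if v ∈ p' then 1 else 0} :=
        ⟨p, hpath, rfl⟩
      exact subset_convexHull ℝ _ hχ
    · -- δ < 1 : recurse on the normalized remainder
      have hc : (0:ℝ) < 1 - δ := by linarith
      set y'' : V → V → ℝ := fun v w => (1 - δ)⁻¹ * y' v w with hy''def
      have hpt'' : ∀ v w, y'' v w = (1 - δ)⁻¹ * y' v w := fun _ _ => rfl
      have hnn'' : ∀ v w, 0 ≤ y'' v w := fun v w =>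
        mul_nonneg (inv_nonneg.mpr hc.le) (hnn' v w)
      have hsupp'' : ∀ v w, y'' v w ≠ 0 → (A v w ∨ (v = t ∧ w = s)) := by
        intro v w h
        refine hsupp' v w ?_
        intro hz
        rw [hpt'', hz, mul_zero] at h
        exact h rfl
      have hcons'' : ∀ v, ∑ w, y'' v w = ∑ w, y'' w v := by
        intro v
        simp only [hpt'']
        rw [← Finset.mul_sum, ← Finset.mul_sum, hcons' v]
      have hts1'' : y'' t s = 1 := by
        rw [hpt'', hts1']
        field_simp
      have htz'' : ∀ w, w ≠ s → y'' t w = 0 := by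
        intro w hw
        rw [hpt'', htz' w hw, mul_zero]
      -- support strictly decreases
      obtain ⟨qm, hqm_mem, hqm_eq⟩ := Finset.exists_mem_eq_inf' harcsne (fun q => y q.1 q.2)
      have hqm_y : y qm.1 qm.2 = δ := by rw [hδdef, ← hqm_eq]
      have hy'qm : y' qm.1 qm.2 = 0 := by
        rw [hpt, if_pos (by simpa using hqm_mem), mul_one, hqm_y]; ring
      have hsupp_ss : (univ ×ˢ univ).filter (fun q : V × V => y'' q.1 q.2 ≠ 0) ⊂
          (univ ×ˢ univ).filter (fun q : V × V => y q.1 q.2 ≠ 0) := by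
        constructor
        · intro q hq
          simp only [mem_filter] at hq ⊢
          refine ⟨hq.1, ?_⟩
          apply hsuppsub
          intro hz
          rw [hpt'', hz, mul_zero] at hq
          exact hq.2 rfl
        · intro hss
          have h1 : qm ∈ (univ ×ˢ univ).filter (fun q : V × V => y q.1 q.2 ≠ 0) := by
            simp only [mem_filter, mem_product, mem_univ, true_and, and_true]
            rw [hqm_y]
            exact ne_of_gt hδpos
          have h2 := hss h1
          simp only [mem_filter] at h2
          rw [hpt'', hy'qm, mul_zero] at h2
          exact h2.2 rfl
      have hcard'' : ((univ ×ˢ univ).filter (fun q : V × V => y'' q.1 q.2 ≠ 0)).card ≤ N := by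
        have := Finset.card_lt_card hsupp_ss
        omega
      have hIH := ih y'' hcard'' hnn'' hsupp'' hcons'' hts1'' htz''
      -- combine
      have hxcomb : (fun v => ∑ w, y v w) =
          δ • (fun v => if v ∈ p then (1:ℝ) else 0) + (1 - δ) • (fun v => ∑ w, y'' v w) := by
        funext v
        simp only [Pi.add_apply, Pi.smul_apply, smul_eq_mul]
        have h2 : ∑ w, y'' v w = (1 - δ)⁻¹ * ∑ w, y' v w := by
          simp only [hpt'']
          rw [← Finset.mul_sum]
        rw [h2, hrow' v]
        have h3 : (1 - δ) * ((1 - δ)⁻¹ * ((∑ w, y v w) - δ * (if v ∈ nodes then 1 else 0)))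
            = (∑ w, y v w) - δ * (if v ∈ nodes then 1 else 0) := by
          rw [← mul_assoc, mul_inv_cancel₀ (ne_of_gt hc), one_mul]
        rw [h3]
        by_cases h : v ∈ nodes
        · rw [if_pos h, if_pos ((hmemp v).mpr h)]; ring
        · rw [if_neg h, if_neg (fun hh => h ((hmemp v).mp hh))]; ring
      rw [hxcomb]
      have hχ : (fun v => if v ∈ p then (1:ℝ) else 0) ∈ {x : V → ℝ |
          ∃ p' : List V, IsPathList A s t p' ∧ x = fun v => if v ∈ p' then 1 else 0} :=
        ⟨p, hpath, rfl⟩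
      exact (convex_convexHull ℝ _) (subset_convexHull ℝ _ hχ) hIH
        hδpos.le hc.le (by ring)

end Decomp

section Easy
variable {V : Type*} [Fintype V]

lemma path_indicator_mem (A : V → V → Prop) (s t : V) (p : List V)
    (hp : IsPathList A s t p) :
    (fun v => if v ∈ p then (1:ℝ) else 0) ∈ {x : V → ℝ |
        x s = 1 ∧ x t = 1 ∧
        (∀ T : Finset V, t ∉ T →
          ∑ v ∈ T, x v ≤ ∑ w ∈ Finset.univ.filter (fun w => ∃ v ∈ T, A v w), x w) ∧
        ∀ v, 0 ≤ x v} := by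
  classical
  obtain ⟨hnd, hch, hhd, hlast⟩ := hp
  have hs : s ∈ p := List.mem_of_mem_head? (Option.mem_def.mpr hhd)
  have ht : t ∈ p := List.mem_of_mem_getLast? (Option.mem_def.mpr hlast)
  have hne : p ≠ [] := by intro h; rw [h] at hhd; simp at hhd
  have hlen1 : 0 < p.length := List.length_pos_iff.mpr hne
  have hlastd : p.getD (p.length - 1) s = t := by
    rw [List.getLast?_eq_getElem?] at hlast
    obtain ⟨h, h2⟩ := List.getElem?_eq_some_iff.mp hlast
    rw [List.getD_eq_getElem _ _ h]
    exact h2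
  refine ⟨by simp [hs], by simp [ht], ?_, fun v => by dsimp only; split <;> norm_num⟩
  intro T hT
  simp only
  rw [Finset.sum_boole, Finset.sum_boole, Nat.cast_le]
  have step1 : (T.filter (fun v => v ∈ p)).card ≤
      ((range p.length).filter (fun i => p.getD i s ∈ T)).card := by
    apply Finset.card_le_card_of_injOn (fun v => p.idxOf v)
    · intro v hv
      rw [mem_coe, mem_filter] at hv
      obtain ⟨hvT, hvp⟩ := hv
      have hidx : p.idxOf v < p.length := List.idxOf_lt_length_iff.mpr hvp
      rw [mem_coe, mem_filter, mem_range]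
      refine ⟨hidx, ?_⟩
      rw [List.getD_eq_getElem _ _ hidx, List.getElem_idxOf hidx]
      exact hvT
    · intro v hv v' hv' heq
      simp only [coe_filter, Set.mem_setOf_eq] at hv hv'
      have h1 : p.idxOf v < p.length := List.idxOf_lt_length_iff.mpr hv.2
      have h2 : p.idxOf v' < p.length := List.idxOf_lt_length_iff.mpr hv'.2
      have h3 : p[p.idxOf v]'h1 = p[p.idxOf v']'h2 := by
        simp only [heq]
      rw [List.getElem_idxOf h1, List.getElem_idxOf h2] at h3
      exact h3
  have step2 : ((range p.length).filter (fun i => p.getD i s ∈ T)).card ≤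
      ((range p.length).filter
        (fun i => p.getD i s ∈ univ.filter (fun w => ∃ v ∈ T, A v w))).card := by
    apply Finset.card_le_card_of_injOn (fun i => i + 1)
    · intro i hi
      rw [mem_coe, mem_filter, mem_range] at hi
      obtain ⟨hilt, hiT⟩ := hi
      have hvt : p.getD i s ≠ t := fun h => hT (h ▸ hiT)
      have hine : i ≠ p.length - 1 := fun h => hvt (by rw [h]; exact hlastd)
      have hi1 : i + 1 < p.length := by omega
      rw [mem_coe, mem_filter, mem_range]
      refine ⟨hi1, ?_⟩
      rw [mem_filter]
      refine ⟨mem_univ _, ⟨p.getD i s, hiT, ?_⟩⟩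
      have hchain := List.isChain_iff_getElem.mp hch i (by omega)
      rw [List.getD_eq_getElem _ _ hilt, List.getD_eq_getElem _ _ hi1]
      simpa using hchain
    · intro i _ j _ h
      have h' : i + 1 = j + 1 := h
      omega
  have step3 : ((range p.length).filter
      (fun i => p.getD i s ∈ univ.filter (fun w => ∃ v ∈ T, A v w))).card ≤
      ((univ.filter (fun w => ∃ v ∈ T, A v w)).filter (fun w => w ∈ p)).card := by
    apply Finset.card_le_card_of_injOn (fun i => p.getD i s)
    · intro i hi
      rw [mem_coe, mem_filter, mem_range] at hi
      rw [mem_coe, mem_filter]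
      refine ⟨hi.2, ?_⟩
      show p.getD i s ∈ p
      rw [List.getD_eq_getElem _ _ hi.1]
      exact List.getElem_mem _
    · intro i hi j hj heq
      simp only [coe_filter, Set.mem_setOf_eq, mem_range] at hi hj
      have heq' : p.getD i s = p.getD j s := heq
      rw [List.getD_eq_getElem _ _ hi.1, List.getD_eq_getElem _ _ hj.1] at heq'
      exact (hnd.getElem_inj_iff).mp heq'
  exact le_trans step1 (le_trans step2 step3)

lemma rhs_convex (A : V → V → Prop) (s t : V) :
    Convex ℝ {x : V → ℝ | x s = 1 ∧ x t = 1 ∧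
        (∀ T : Finset V, t ∉ T →
          ∑ v ∈ T, x v ≤ ∑ w ∈ Finset.univ.filter (fun w => ∃ v ∈ T, A v w), x w) ∧
        ∀ v, 0 ≤ x v} := by
  intro x hx y hy a b ha hb hab
  obtain ⟨hxs, hxt, hxT, hx0⟩ := hx
  obtain ⟨hys, hyt, hyT, hy0⟩ := hy
  refine ⟨?_, ?_, ?_, ?_⟩
  · simp only [Pi.add_apply, Pi.smul_apply, smul_eq_mul, hxs, hys]
    linarith
  · simp only [Pi.add_apply, Pi.smul_apply, smul_eq_mul, hxt, hyt]
    linarith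
  · intro T hT
    simp only [Pi.add_apply, Pi.smul_apply, smul_eq_mul]
    rw [Finset.sum_add_distrib, Finset.sum_add_distrib,
      ← Finset.mul_sum, ← Finset.mul_sum, ← Finset.mul_sum, ← Finset.mul_sum]
    exact add_le_add (mul_le_mul_of_nonneg_left (hxT T hT) ha)
      (mul_le_mul_of_nonneg_left (hyT T hT) hb)
  · intro v
    simp only [Pi.add_apply, Pi.smul_apply, smul_eq_mul]
    exact add_nonneg (mul_nonneg ha (hx0 v)) (mul_nonneg hb (hy0 v))

end Easy

set_option maxHeartbeats 1000000 in
/-- **Vande Vate's description of the `s`-`t`-path set polytope** of an acyclic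
digraph `D` with source node `s` and a node `t ≠ s`. -/
theorem pathSetPolytope_description {V : Type*} [Fintype V]
    (A : V → V → Prop) (s t : V) (hts : t ≠ s)
    (hacyc : AcyclicRel A)
    (hsource : ∀ v, ¬ A v s) :
    convexHull ℝ {x : V → ℝ | ∃ p : List V, IsPathList A s t p ∧
        x = fun v => if v ∈ p then 1 else 0} =
      {x : V → ℝ |
        x s = 1 ∧ x t = 1 ∧
        (∀ T : Finset V, t ∉ T →
          ∑ v ∈ T, x v ≤ ∑ w ∈ Finset.univ.filter (fun w => ∃ v ∈ T, A v w), x w) ∧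
        ∀ v, 0 ≤ x v} := by
  classical
  apply Set.Subset.antisymm
  · exact convexHull_min
      (fun x hx => by
        obtain ⟨p, hp, rfl⟩ := hx
        exact path_indicator_mem A s t p hp)
      (rhs_convex A s t)
  · intro x hx
    obtain ⟨hxs, hxt, hxT, hx0⟩ := hx
    have hhall : ∀ S : Finset V, ∑ v ∈ S, x v ≤
        ∑ w ∈ univ.filter (fun w => ∃ v ∈ S, A v w ∨ (v = t ∧ w = s)), x w := by
      intro S
      by_cases htS : t ∈ S
      · have h1 : x t + ∑ v ∈ S.erase t, x v = ∑ v ∈ S, x v :=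
          Finset.add_sum_erase S x htS
        have h2 := hxT (S.erase t) (Finset.notMem_erase t S)
        have hns : s ∉ univ.filter (fun w => ∃ v ∈ S.erase t, A v w) := by
          rw [mem_filter]
          rintro ⟨-, v, -, hA⟩
          exact hsource v hA
        have hsub : insert s (univ.filter (fun w => ∃ v ∈ S.erase t, A v w)) ⊆
            univ.filter (fun w => ∃ v ∈ S, A v w ∨ (v = t ∧ w = s)) := by
          intro w hw
          rw [mem_insert] at hw
          rcases hw with rfl | hw
          · rw [mem_filter]
            exact ⟨mem_univ _, t, htS, Or.inr ⟨rfl, rfl⟩⟩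
          · rw [mem_filter] at hw ⊢
            obtain ⟨-, v, hv, hA⟩ := hw
            exact ⟨mem_univ _, v, Finset.mem_of_mem_erase hv, Or.inl hA⟩
        have h4 : ∑ w ∈ insert s (univ.filter (fun w => ∃ v ∈ S.erase t, A v w)), x w ≤
            ∑ w ∈ univ.filter (fun w => ∃ v ∈ S, A v w ∨ (v = t ∧ w = s)), x w :=
          Finset.sum_le_sum_of_subset_of_nonneg hsub (fun w _ _ => hx0 w)
        rw [Finset.sum_insert hns, hxs] at h4
        rw [← h1, hxt]
        linarith
      · have h2 := hxT S htS
        refine le_trans h2 (Finset.sum_le_sum_of_subset_of_nonneg ?_ fun w _ _ => hx0 w)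
        intro w hw
        rw [mem_filter] at hw ⊢
        obtain ⟨-, v, hv, hA⟩ := hw
        exact ⟨mem_univ _, v, hv, Or.inl hA⟩
    have htot : ∑ v : V, x v = ∑ w : V, x w := rfl
    obtain ⟨y, hy0, hyE, hyrow, hycol⟩ :=
      transportation (fun v w => A v w ∨ (v = t ∧ w = s)) x x hx0 hx0 htot
        (fun S => by rw [Finset.filter_congr_decidable]; exact hhall S)
    have hyts : y t s = 1 := by
      have h1 : ∑ v, y v s = x s := hycol s
      have h2 : ∀ v ∈ univ, v ≠ t → y v s = 0 := by
        intro v _ hv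
        by_contra h
        rcases hyE v s h with hA | ⟨h3, -⟩
        · exact hsource v hA
        · exact hv h3
      rw [Finset.sum_eq_single t (fun v h hv => h2 v h hv)
        (fun h => absurd (mem_univ t) h)] at h1
      rw [h1, hxs]
    have hytz : ∀ w, w ≠ s → y t w = 0 := by
      have h1 : ∑ w, y t w = 1 := by rw [hyrow t, hxt]
      have h2 : ∑ w ∈ univ.erase s, y t w = 0 := by
        have h3 : y t s + ∑ w ∈ univ.erase s, y t w = ∑ w, y t w :=
          Finset.add_sum_erase univ (y t) (mem_univ s)
        rw [hyts, h1] at h3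
        linarith
      intro w hw
      exact (Finset.sum_eq_zero_iff_of_nonneg (fun w _ => hy0 t w)).mp h2 w
        (mem_erase.mpr ⟨hw, mem_univ w⟩)
    have hconsy : ∀ v, ∑ w, y v w = ∑ w, y w v := fun v => by rw [hyrow v, hycol v]
    have hx_eq : x = fun v => ∑ w, y v w := funext fun v => (hyrow v).symm
    rw [hx_eq]
    exact decomp_step A s t hts hacyc
      ((univ ×ˢ univ).filter (fun q : V × V => y q.1 q.2 ≠ 0)).card
      y (le_refl _) hy0 hyE hconsy hyts hytz
end

section
/- For every graph G = (V,E), the dimension of the edge polytope P²(G) = conv{χ({v,w}) : {v,w} ∈ E} equals |V| − β(G) − 1, where β(G) is the number of bipartite connected components of G. -/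
open scoped Classical
open Finset

noncomputable section

variable {V : Type*} [Fintype V]

/-- The polytope `P^{≤2}(G)`: convex hull of the characteristic vectors of all
cliques of `G` of size at most `2` (the empty set, singletons, and edges). -/
def cliquePolytopeLE2 (G : SimpleGraph V) : Set (V → ℝ) :=
  convexHull ℝ {x : V → ℝ | ∃ C : Finset V, C.card ≤ 2 ∧
    (∀ u ∈ C, ∀ v ∈ C, u ≠ v → G.Adj u v) ∧
    x = fun v => if v ∈ C then 1 else 0}

/-- The edge polytope `P²(G)`: convex hull of the characteristic vectors of the
edges of `G`. -/
def edgePolytope (G : SimpleGraph V) : Set (V → ℝ) :=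
  convexHull ℝ {x : V → ℝ | ∃ u v : V, G.Adj u v ∧
    x = fun w => if w = u ∨ w = v then 1 else 0}

/-- `T` is a stable (independent) set of `G`. -/
def IsStableSet (G : SimpleGraph V) (T : Finset V) : Prop :=
  ∀ u ∈ T, ∀ v ∈ T, ¬ G.Adj u v

/-- `N̄(T)`: the nodes outside `T` that are not adjacent to any node of `T`. -/
def nonNbhd (G : SimpleGraph V) (T : Finset V) : Finset V :=
  Finset.univ.filter fun v => v ∉ T ∧ ∀ u ∈ T, ¬ G.Adj u v

/-- `β(G)`: the number of bipartite connected components of `G`. -/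
def numBipartiteComponents (G : SimpleGraph V) : ℕ :=
  Nat.card {c : G.ConnectedComponent // (G.induce c.supp).Colorable 2}

end

set_option linter.unusedSectionVars false

section
open SimpleGraph Matrix

noncomputable section Aux
variable {V : Type*} [Fintype V] (G : SimpleGraph V)

def edgeKer : Submodule ℝ (V → ℝ) where
  carrier := {y | ∀ u v, G.Adj u v → y u + y v = 0}
  add_mem' := by
    intro a b ha hb u v huv
    have h1 := ha u v huv; have h2 := hb u v huv
    simp only [Pi.add_apply]; linarith
  zero_mem' := by intro u v _; simp
  smul_mem' := by
    intro c a ha u v huv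
    have := ha u v huv
    simp only [Pi.smul_apply, smul_eq_mul]
    rw [← mul_add, this, mul_zero]

/-- A sign function on each component, coming from a 2-coloring when one exists. -/
def sgn (c : G.ConnectedComponent) (v : V) : ℝ :=
  if h : v ∈ c.supp ∧ (G.induce c.supp).Colorable 2 then
    (if (h.2.some : (G.induce c.supp).Coloring (Fin 2)) ⟨v, h.1⟩ = 0 then 1 else -1)
  else 1

theorem sgn_mul_self (c : G.ConnectedComponent) (v : V) : sgn G c v * sgn G c v = 1 := by
  rw [sgn]; split
  · split <;> norm_num
  · norm_num

theorem sgn_ne_zero (c : G.ConnectedComponent) (v : V) : sgn G c v ≠ 0 := by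
  intro h
  have := sgn_mul_self G c v
  rw [h, mul_zero] at this; exact zero_ne_one this

theorem sgn_adj {G : SimpleGraph V} {c : G.ConnectedComponent}
    (hc : (G.induce c.supp).Colorable 2) {u v : V} (hu : u ∈ c.supp) (hv : v ∈ c.supp)
    (huv : G.Adj u v) : sgn G c u = - sgn G c v := by
  rw [sgn, sgn, dif_pos ⟨hu, hc⟩, dif_pos ⟨hv, hc⟩]
  have hne : (hc.some : (G.induce c.supp).Coloring (Fin 2)) ⟨u, hu⟩ ≠
      (hc.some : (G.induce c.supp).Coloring (Fin 2)) ⟨v, hv⟩ :=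
    hc.some.valid (by exact huv)
  have hgen : ∀ a b : Fin 2, a ≠ b →
      ((if a = 0 then (1:ℝ) else -1) = - if b = 0 then (1:ℝ) else -1) := by
    intro a b h
    fin_cases a <;> fin_cases b <;> simp_all
  exact hgen _ _ hne

theorem edgeKer_walk {G : SimpleGraph V} {y : V → ℝ} (hy : y ∈ edgeKer G) :
    ∀ {u v : V} (p : G.Walk u v), y v = (-1 : ℝ) ^ p.length * y u := by
  intro u v p
  induction p with
  | nil => simp
  | cons h q ih =>
    rename_i a b c
    have h1 : y b = - y a := by have := hy a b h; linarith
    rw [SimpleGraph.Walk.length_cons, ih, h1]; ring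

theorem colorable_of_ne_zero {G : SimpleGraph V} {y : V → ℝ} (hy : y ∈ edgeKer G)
    {c : G.ConnectedComponent} {v : V} (hv : v ∈ c.supp) (hne : y v ≠ 0) :
    (G.induce c.supp).Colorable 2 := by
  have key : ∀ u ∈ c.supp, y u = y v ∨ y u = - y v := by
    intro u hu
    rw [ConnectedComponent.mem_supp_iff] at hu hv
    have hr : G.Reachable v u := ConnectedComponent.exact (hv.trans hu.symm)
    obtain ⟨p⟩ := hr
    have := edgeKer_walk hy p
    rcases neg_one_pow_eq_or ℝ p.length with h | h <;> rw [h] at this <;> simp [this]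
  refine ⟨SimpleGraph.Coloring.mk (fun u => if y ↑u = y v then 0 else 1) ?_⟩
  intro a b hab hc
  have hadj : G.Adj ↑a ↑b := hab
  have hsum := hy a b hadj
  rcases key _ a.2 with h1 | h1 <;> rcases key _ b.2 with h2 | h2
  · exact hne (by linarith)
  · have h3 : y ↑b ≠ y v := by rw [h2]; intro h; exact hne (by linarith)
    rw [if_pos h1, if_neg h3] at hc; exact zero_ne_one hc
  · have h3 : y ↑a ≠ y v := by rw [h1]; intro h; exact hne (by linarith)
    rw [if_neg h3, if_pos h2] at hc; exact one_ne_zero hc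
  · exact hne (by linarith)

/-- In the kernel, `y · sgn` is constant along walks within a bipartite component. -/
theorem edgeKer_sgn_const {G : SimpleGraph V} {y : V → ℝ} (hy : y ∈ edgeKer G)
    {c : G.ConnectedComponent} (hc : (G.induce c.supp).Colorable 2) :
    ∀ {a b : V} (_ : G.Walk a b), a ∈ c.supp →
      y b * sgn G c b = y a * sgn G c a := by
  intro a b p
  induction p with
  | nil => intro _; rfl
  | cons h q ih =>
    rename_i a a' b
    intro ha
    have ha' : a' ∈ c.supp := by
      rw [ConnectedComponent.mem_supp_iff] at ha ⊢
      rw [← ha]; exact (ConnectedComponent.sound h.reachable).symm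
    have h1 : y a' = - y a := by have := hy a a' h; linarith
    have h2 : sgn G c a' = - sgn G c a := sgn_adj hc ha' ha h.symm
    rw [ih ha', h1, h2]; ring

abbrev BipComps := {c : G.ConnectedComponent // (G.induce c.supp).Colorable 2}

/-- The parametrization of the kernel by bipartite components. -/
def psi : (BipComps G → ℝ) →ₗ[ℝ] (V → ℝ) where
  toFun := fun t v =>
    if h : (G.induce (G.connectedComponentMk v).supp).Colorable 2 then
      t ⟨_, h⟩ * sgn G (G.connectedComponentMk v) v else 0
  map_add' := by
    intro t s; funext v
    by_cases h : (G.induce (G.connectedComponentMk v).supp).Colorable 2 <;>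
      simp [h, add_mul]
  map_smul' := by
    intro r t; funext v
    by_cases h : (G.induce (G.connectedComponentMk v).supp).Colorable 2 <;>
      simp [h, mul_assoc]

theorem psi_mem (t : BipComps G → ℝ) : psi G t ∈ edgeKer G := by
  intro u v huv
  have hcc : G.connectedComponentMk u = G.connectedComponentMk v :=
    ConnectedComponent.sound huv.reachable
  have hu : u ∈ (G.connectedComponentMk u).supp := rfl
  have hv : v ∈ (G.connectedComponentMk u).supp := hcc.symm
  simp only [psi, LinearMap.coe_mk, AddHom.coe_mk]
  rw [← hcc]
  by_cases h : (G.induce (G.connectedComponentMk u).supp).Colorable 2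
  · rw [dif_pos h, dif_pos h, sgn_adj h hu hv huv]; ring
  · rw [dif_neg h, dif_neg h]; norm_num

theorem psi_injective : Function.Injective (psi G) := by
  rw [injective_iff_map_eq_zero]
  intro t ht
  funext b
  obtain ⟨c, hc⟩ := b
  have hv : G.connectedComponentMk c.out = c := c.out_eq
  have := congrFun ht c.out
  simp only [psi, LinearMap.coe_mk, AddHom.coe_mk, Pi.zero_apply] at this
  rw [hv] at this
  rw [dif_pos hc] at this
  rcases mul_eq_zero.mp this with h | h
  · exact h
  · exact absurd h (sgn_ne_zero G c c.out)

theorem psi_surjective_onto (y : V → ℝ) (hy : y ∈ edgeKer G) :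
    ∃ t : BipComps G → ℝ, psi G t = y := by
  refine ⟨fun b => y b.1.out * sgn G b.1 b.1.out, ?_⟩
  funext v
  set c := G.connectedComponentMk v with hc
  simp only [psi, LinearMap.coe_mk, AddHom.coe_mk]
  by_cases h : (G.induce c.supp).Colorable 2
  · rw [dif_pos h]
    have hout : G.connectedComponentMk c.out = c := c.out_eq
    have hr : G.Reachable v c.out := ConnectedComponent.exact (hc.symm.trans hout.symm)
    obtain ⟨p⟩ := hr
    have hkey := edgeKer_sgn_const hy h p (show v ∈ c.supp from hc.symm)
    -- hkey : y c.out * sgn G c c.out = y v * sgn G c v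
    show y c.out * sgn G c c.out * sgn G c v = y v
    rw [hkey, mul_assoc, sgn_mul_self, mul_one]
  · rw [dif_neg h]
    by_contra hne
    exact h (colorable_of_ne_zero hy (show v ∈ c.supp from hc.symm) fun h0 => hne (by rw [h0]))

theorem finrank_edgeKer : Module.finrank ℝ (edgeKer G) =
    Nat.card {c : G.ConnectedComponent // (G.induce c.supp).Colorable 2} := by
  have e : (BipComps G → ℝ) ≃ₗ[ℝ] edgeKer G := by
    refine LinearEquiv.ofBijective ((psi G).codRestrict (edgeKer G) (psi_mem G)) ⟨?_, ?_⟩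
    · intro a b hab
      apply psi_injective G
      exact congrArg Subtype.val hab
    · rintro ⟨y, hy⟩
      obtain ⟨t, ht⟩ := psi_surjective_onto G y hy
      exact ⟨t, Subtype.ext ht⟩
  haveI : Fintype (BipComps G) := Fintype.ofFinite _
  rw [← e.finrank_eq, Module.finrank_fintype_fun_eq_card, Nat.card_eq_fintype_card]

/-- The generating set of the edge polytope. -/
def edgeVecs : Set (V → ℝ) :=
  {x : V → ℝ | ∃ u v : V, G.Adj u v ∧ x = fun w => if w = u ∨ w = v then 1 else 0}

theorem sum_pair_indicator {u w : V} (h : u ≠ w) (y : V → ℝ) :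
    ∑ v, (if v = u ∨ v = w then (1:ℝ) else 0) * y v = y u + y w := by
  have key : ∀ v, (if v = u ∨ v = w then (1:ℝ) else 0) * y v =
      (if v = u then y v else 0) + (if v = w then y v else 0) := by
    intro v
    by_cases h1 : v = u <;> by_cases h2 : v = w <;> simp_all
  rw [Finset.sum_congr rfl fun v _ => key v, Finset.sum_add_distrib]
  simp [Finset.sum_ite_eq']

/-- The node-edge incidence matrix. -/
def incMatrix' : Matrix ↥G.edgeSet V ℝ := fun e v => if v ∈ (e : Sym2 V) then 1 else 0

theorem incMatrix'_mulVec (y : V → ℝ) {u w : V} (huw : G.Adj u w) :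
    (incMatrix' G).mulVec y ⟨s(u, w), huw⟩ = y u + y w := by
  show ∑ v, (if v ∈ s(u, w) then (1:ℝ) else 0) * y v = y u + y w
  simp only [Sym2.mem_iff]
  exact sum_pair_indicator huw.ne y

theorem ker_incMatrix' : LinearMap.ker (incMatrix' G).mulVecLin = edgeKer G := by
  ext y
  simp only [LinearMap.mem_ker, Matrix.mulVecLin_apply]
  constructor
  · intro h u v huv
    have := congrFun h ⟨s(u, v), huv⟩
    rwa [incMatrix'_mulVec G y huv] at this
  · intro h
    funext e
    obtain ⟨e, he⟩ := e
    revert he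
    refine Sym2.ind (fun u w => ?_) e
    intro he
    rw [incMatrix'_mulVec G y he]
    exact h u w he

theorem range_incMatrix'T :
    LinearMap.range (incMatrix' G)ᵀ.mulVecLin = Submodule.span ℝ (edgeVecs G) := by
  rw [Matrix.range_mulVecLin]
  congr 1
  ext x
  constructor
  · rintro ⟨e, rfl⟩
    obtain ⟨e, he⟩ := e
    revert he
    refine Sym2.ind (fun u w => ?_) e
    intro he
    refine ⟨u, w, he, ?_⟩
    funext v
    show (if v ∈ s(u, w) then (1:ℝ) else 0) = _
    simp [Sym2.mem_iff]
  · rintro ⟨u, w, huw, rfl⟩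
    refine ⟨⟨s(u, w), huw⟩, ?_⟩
    funext v
    show (if v ∈ s(u, w) then (1:ℝ) else 0) = _
    simp [Sym2.mem_iff]

theorem finrank_span_edgeVecs :
    Module.finrank ℝ (Submodule.span ℝ (edgeVecs G)) + Module.finrank ℝ (edgeKer G) =
      Fintype.card V := by
  have h1 := LinearMap.finrank_range_add_finrank_ker (incMatrix' G).mulVecLin
  rw [ker_incMatrix' G, Module.finrank_fintype_fun_eq_card] at h1
  have h2 : (incMatrix' G)ᵀ.rank = (incMatrix' G).rank := Matrix.rank_transpose _
  rw [Matrix.rank, Matrix.rank, range_incMatrix'T G] at h2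
  rw [← h2] at h1
  exact h1

/-- The sum-of-coordinates functional. -/
def sumLin : (V → ℝ) →ₗ[ℝ] ℝ where
  toFun := fun y => ∑ v, y v
  map_add' := by intros; simp [Finset.sum_add_distrib]
  map_smul' := by intros; simp [Finset.mul_sum]

theorem sumLin_edgeVec {u w : V} (h : u ≠ w) :
    sumLin (fun v => if v = u ∨ v = w then (1:ℝ) else 0) = 2 := by
  have key := sum_pair_indicator h (fun _ => (1:ℝ))
  simp only [mul_one] at key
  show ∑ v, (if v = u ∨ v = w then (1:ℝ) else 0) = 2
  rw [key]; norm_num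

theorem main_nonempty (hE : ∃ u v, G.Adj u v) :
    Module.finrank ℝ (Submodule.span ℝ (edgeVecs G)) =
      Module.finrank ℝ (vectorSpan ℝ (edgeVecs G)) + 1 := by
  obtain ⟨u, w, huw⟩ := hE
  set x₀ : V → ℝ := fun v => if v = u ∨ v = w then 1 else 0 with hx₀def
  have hx₀ : x₀ ∈ edgeVecs G := ⟨u, w, huw, rfl⟩
  have hσ : ∀ x ∈ edgeVecs G, sumLin x = 2 := by
    rintro x ⟨a, b, hab, rfl⟩; exact sumLin_edgeVec hab.ne
  have hVS_le : vectorSpan ℝ (edgeVecs G) ≤ LinearMap.ker sumLin := by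
    rw [vectorSpan_eq_span_vsub_set_right ℝ hx₀, Submodule.span_le]
    rintro z ⟨x, hx, rfl⟩
    rw [SetLike.mem_coe, LinearMap.mem_ker]
    show sumLin (x - x₀) = 0
    rw [map_sub, hσ x hx, hσ x₀ hx₀, sub_self]
  have hsup : Submodule.span ℝ (edgeVecs G) =
      vectorSpan ℝ (edgeVecs G) ⊔ Submodule.span ℝ {x₀} := by
    apply le_antisymm
    · rw [Submodule.span_le]
      intro x hx
      rw [SetLike.mem_coe, show x = (x - x₀) + x₀ by ring]
      exact Submodule.add_mem _
        (Submodule.mem_sup_left (vsub_mem_vectorSpan ℝ hx hx₀))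
        (Submodule.mem_sup_right (Submodule.mem_span_singleton_self x₀))
    · apply sup_le
      · rw [vectorSpan_eq_span_vsub_set_right ℝ hx₀, Submodule.span_le]
        rintro z ⟨x, hx, rfl⟩
        exact Submodule.sub_mem _ (Submodule.subset_span hx) (Submodule.subset_span hx₀)
      · rw [Submodule.span_le, Set.singleton_subset_iff]
        exact Submodule.subset_span hx₀
  have hdisj : vectorSpan ℝ (edgeVecs G) ⊓ Submodule.span ℝ {x₀} = ⊥ := by
    rw [eq_bot_iff]
    intro z hz
    rw [Submodule.mem_inf] at hz
    obtain ⟨hz1, hz2⟩ := hz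
    rw [Submodule.mem_span_singleton] at hz2
    obtain ⟨a, rfl⟩ := hz2
    have h0 : sumLin (a • x₀) = 0 := hVS_le hz1
    rw [_root_.map_smul, hσ x₀ hx₀, smul_eq_mul] at h0
    have : a = 0 := by linarith
    rw [this, zero_smul]
    exact Submodule.zero_mem ⊥
  have hx₀ne : x₀ ≠ 0 := by
    intro h0
    have := hσ x₀ hx₀
    rw [h0, map_zero] at this
    norm_num at this
  have hfr := Submodule.finrank_sup_add_finrank_inf_eq
    (vectorSpan ℝ (edgeVecs G)) (Submodule.span ℝ {x₀})
  rw [hdisj, finrank_bot, finrank_span_singleton hx₀ne] at hfr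
  rw [hsup]
  omega

theorem beta_eq_card (hE : ¬ ∃ u v, G.Adj u v) :
    Nat.card {c : G.ConnectedComponent // (G.induce c.supp).Colorable 2} =
      Fintype.card V := by
  have hall : ∀ c : G.ConnectedComponent, (G.induce c.supp).Colorable 2 := by
    intro c
    refine ⟨SimpleGraph.Coloring.mk (fun _ => 0) ?_⟩
    intro a b hab
    exact absurd ⟨_, _, hab⟩ hE
  rw [Nat.card_congr (Equiv.subtypeUnivEquiv hall)]
  have hbij : Function.Bijective (G.connectedComponentMk) := by
    constructor
    · intro a b hab
      obtain ⟨p⟩ := ConnectedComponent.exact hab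
      cases p with
      | nil => rfl
      | cons h _ => exact absurd ⟨_, _, h⟩ hE
    · intro c
      exact ⟨c.out, c.out_eq⟩
  rw [← Nat.card_eq_of_bijective _ hbij, Nat.card_eq_fintype_card]

end Aux

end

/-- The dimension of the edge polytope `P²(G)` equals `|V| - β(G) - 1`, where `β(G)`
is the number of bipartite connected components of `G`. -/
theorem edgePolytope_dim {V : Type*} [Fintype V] (G : SimpleGraph V) :
    Module.finrank ℝ ↥(vectorSpan ℝ (edgePolytope G)) =
      Fintype.card V - numBipartiteComponents G - 1 := by
  classical
  have hvs : vectorSpan ℝ (edgePolytope G) = vectorSpan ℝ (edgeVecs G) := by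
    rw [show edgePolytope G = convexHull ℝ (edgeVecs G) from rfl,
      ← direction_affineSpan, affineSpan_convexHull, direction_affineSpan]
  rw [hvs, numBipartiteComponents]
  by_cases hE : ∃ u v, G.Adj u v
  · have h1 := finrank_span_edgeVecs G
    have h2 := main_nonempty G hE
    have h3 := finrank_edgeKer G
    omega
  · have hX : edgeVecs G = ∅ := by
      rw [Set.eq_empty_iff_forall_notMem]
      rintro x ⟨u, v, huv, -⟩
      exact hE ⟨u, v, huv⟩
    rw [hX, vectorSpan_empty, finrank_bot, beta_eq_card G hE]
    omega
end

section
/- For every graph G = (V,E), the polytope P^{≤2}(G) equals the set of x ∈ ℝ^V satisfying x ≥ 0 and 2·x(T) + x(N̄(T)) ≤ 2 for every stable set T ⊆ V, where N̄(T) is the set of nodes outside T not adjacent to any node of T. -/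
open scoped Classical
open Finset

open MeasureTheory in
private lemma key_ineq {V : Type*} [Fintype V] (G : SimpleGraph V) (x c : V → ℝ) (u : ℝ)
    (hu : 0 < u) (hc1 : ∀ v, c v < u) (hc2 : ∀ a b, G.Adj a b → c a + c b < u)
    (hx0 : ∀ v, 0 ≤ x v)
    (hxT : ∀ T : Finset V, IsStableSet G T →
      2 * ∑ v ∈ T, x v + ∑ v ∈ nonNbhd G T, x v ≤ 2) :
    ∑ v, x v * c v ≤ u := by
  classical
  set St : ℝ → Finset V := fun t => Finset.univ.filter (fun v => u - t < c v) with hSt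
  have hmemT : ∀ t v, v ∈ St t ↔ u - c v < t := by
    intro t v
    simp only [hSt, Finset.mem_filter, Finset.mem_univ, true_and]
    constructor <;> intro h <;> linarith
  -- closed neighborhood
  set N : V → Finset V := fun v => insert v (Finset.univ.filter (G.Adj v)) with hN
  have hvN : ∀ v, v ∈ N v := fun v => Finset.mem_insert_self _ _
  set m : V → ℝ := fun v => (N v).sup' (⟨v, hvN v⟩ : (N v).Nonempty) c with hm
  have hcm : ∀ v, c v ≤ m v := fun v => Finset.le_sup' c (hvN v)
  have hmu : ∀ v, m v < u := by
    intro v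
    rw [hm]
    exact (Finset.sup'_lt_iff _).mpr (fun w _ => hc1 w)
  have hmemN : ∀ t v, v ∈ nonNbhd G (St t) ↔ t ≤ u - m v := by
    intro t v
    have : (m v ≤ u - t) ↔ (t ≤ u - m v) := by constructor <;> intro h <;> linarith
    rw [← this, show m v ≤ u - t ↔ ∀ w ∈ N v, c w ≤ u - t from Finset.sup'_le_iff _ _]
    simp only [nonNbhd, Finset.mem_filter, Finset.mem_univ, true_and, hmemT]
    constructor
    · rintro ⟨h1, h2⟩ w hw
      rcases Finset.mem_insert.mp hw with rfl | hw'
      · have := not_lt.mp h1; linarith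
      · have hadj : G.Adj v w := (Finset.mem_filter.mp hw').2
        by_contra hlt
        exact h2 w (by linarith) hadj.symm
    · intro h
      refine ⟨fun hlt => ?_, fun w hw hadj => ?_⟩
      · have := h v (hvN v); linarith
      · have : w ∈ N v := Finset.mem_insert_of_mem (Finset.mem_filter.mpr ⟨Finset.mem_univ _, hadj.symm⟩)
        have := h w this; linarith
  set A : Set ℝ := Set.Ioc 0 (u/2) with hA
  have hAmeas : MeasurableSet A := measurableSet_Ioc
  have hAvol : volume A < ⊤ := by rw [hA, Real.volume_Ioc]; exact ENNReal.ofReal_lt_top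
  -- indicator descriptions
  have hg1 : ∀ v, (fun t => if v ∈ St t then (1:ℝ) else 0)
      = (Set.Ioi (u - c v)).indicator (fun _ => (1:ℝ)) := by
    intro v; funext t
    by_cases h : u - c v < t
    · rw [if_pos ((hmemT t v).mpr h), Set.indicator_of_mem (Set.mem_Ioi.mpr h)]
    · rw [if_neg (fun hh => h ((hmemT t v).mp hh)),
        Set.indicator_of_notMem (by simpa using h)]
  have hg2 : ∀ v, (fun t => if v ∈ nonNbhd G (St t) then (1:ℝ) else 0)
      = (Set.Iic (u - m v)).indicator (fun _ => (1:ℝ)) := by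
    intro v; funext t
    by_cases h : t ≤ u - m v
    · rw [if_pos ((hmemN t v).mpr h), Set.indicator_of_mem (Set.mem_Iic.mpr h)]
    · rw [if_neg (fun hh => h ((hmemN t v).mp hh)),
        Set.indicator_of_notMem (by simpa using h)]
  have hint1 : ∀ v, IntegrableOn (fun t => if v ∈ St t then (1:ℝ) else 0) A volume := by
    intro v; rw [hg1]
    exact (integrableOn_const (C := (1:ℝ)) hAvol.ne).indicator measurableSet_Ioi
  have hint2 : ∀ v, IntegrableOn (fun t => if v ∈ nonNbhd G (St t) then (1:ℝ) else 0) A volume := by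
    intro v; rw [hg2]
    exact (integrableOn_const (C := (1:ℝ)) hAvol.ne).indicator measurableSet_Iic
  -- integral values
  have hI1 : ∀ v, ∫ t in A, (if v ∈ St t then (1:ℝ) else 0) = max 0 (c v - u/2) := by
    intro v
    rw [hg1, MeasureTheory.setIntegral_indicator measurableSet_Ioi]
    rw [hA, Set.Ioc_inter_Ioi, MeasureTheory.setIntegral_const, smul_eq_mul, mul_one,
      measureReal_def, Real.volume_Ioc]
    have h0 : (0:ℝ) ⊔ (u - c v) = u - c v := sup_eq_right.mpr (by linarith [hc1 v])
    rw [h0, ENNReal.toReal_ofReal', max_comm]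
    congr 1; ring
  have hI2 : ∀ v, ∫ t in A, (if v ∈ nonNbhd G (St t) then (1:ℝ) else 0) = min (u/2) (u - m v) := by
    intro v
    rw [hg2, MeasureTheory.setIntegral_indicator measurableSet_Iic]
    rw [hA, Set.Ioc_inter_Iic, MeasureTheory.setIntegral_const, smul_eq_mul, mul_one,
      measureReal_def, Real.volume_Ioc, ENNReal.toReal_ofReal', sub_zero]
    exact max_eq_left (le_min (by linarith) (by linarith [hmu v]))
  -- pointwise inequality
  have hpt : ∀ v, c v ≤ 2 * max 0 (c v - u/2) + min (u/2) (u - m v) := by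
    intro v
    obtain ⟨w, hw, hwm⟩ := Finset.exists_mem_eq_sup' ⟨v, hvN v⟩ c
    rcases le_or_gt (c v) (u/2) with h | h
    · have hcu : c v ≤ u - m v := by
        have hmv : m v = c w := hwm
        rcases Finset.mem_insert.mp hw with rfl | hw'
        · rw [hmv]; linarith
        · have hadj : G.Adj v w := (Finset.mem_filter.mp hw').2
          have := hc2 v w hadj
          rw [hmv]; linarith
      have : c v ≤ min (u/2) (u - m v) := le_min h hcu
      have h0 : (0:ℝ) ≤ max 0 (c v - u/2) := le_max_left _ _
      linarith
    · have hmeq : m v = c v := by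
        refine le_antisymm ?_ (hcm v)
        rw [hm]; apply Finset.sup'_le
        intro w' hw'
        rcases Finset.mem_insert.mp hw' with rfl | hw''
        · exact le_refl _
        · have hadj : G.Adj v w' := (Finset.mem_filter.mp hw'').2
          have := hc2 v w' hadj; linarith
      rw [hmeq, max_eq_right (by linarith), min_eq_right (by linarith)]
      linarith
  -- main chain
  have hstable : ∀ t ∈ A, IsStableSet G (St t) := by
    intro t ht a ha b hb hadj
    rw [hmemT] at ha hb
    have := hc2 a b hadj
    rw [hA, Set.mem_Ioc] at ht
    linarith
  have hsum : ∀ t, ∑ v, x v * (2 * (if v ∈ St t then (1:ℝ) else 0)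
        + (if v ∈ nonNbhd G (St t) then (1:ℝ) else 0))
      = 2 * ∑ v ∈ St t, x v + ∑ v ∈ nonNbhd G (St t), x v := by
    intro t
    have e1 : ∑ v ∈ St t, x v = ∑ v, (if v ∈ St t then x v else 0) := by
      rw [Finset.sum_ite_mem, Finset.univ_inter]
    have e2 : ∑ v ∈ nonNbhd G (St t), x v
        = ∑ v, (if v ∈ nonNbhd G (St t) then x v else 0) := by
      rw [Finset.sum_ite_mem, Finset.univ_inter]
    rw [e1, e2, Finset.mul_sum, ← Finset.sum_add_distrib]
    apply Finset.sum_congr rfl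
    intro v _
    by_cases h1 : v ∈ St t <;> by_cases h2 : v ∈ nonNbhd G (St t) <;>
      simp [h1, h2] <;> ring
  have hintsum : IntegrableOn (fun t => ∑ v, x v * (2 * (if v ∈ St t then (1:ℝ) else 0)
        + (if v ∈ nonNbhd G (St t) then (1:ℝ) else 0))) A volume := by
    apply MeasureTheory.integrable_finset_sum
    intro v _
    exact (((hint1 v).const_mul 2).add (hint2 v)).const_mul (x v)
  calc ∑ v, x v * c v
      ≤ ∑ v, x v * (2 * max 0 (c v - u/2) + min (u/2) (u - m v)) := by
        apply Finset.sum_le_sum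
        intro v _
        exact mul_le_mul_of_nonneg_left (hpt v) (hx0 v)
    _ = ∑ v, ∫ t in A, x v * (2 * (if v ∈ St t then (1:ℝ) else 0)
          + (if v ∈ nonNbhd G (St t) then (1:ℝ) else 0)) := by
        apply Finset.sum_congr rfl
        intro v _
        rw [MeasureTheory.integral_const_mul]
        congr 1
        rw [MeasureTheory.integral_add ((hint1 v).const_mul 2) (hint2 v),
          MeasureTheory.integral_const_mul, hI1, hI2]
    _ = ∫ t in A, ∑ v, x v * (2 * (if v ∈ St t then (1:ℝ) else 0)
          + (if v ∈ nonNbhd G (St t) then (1:ℝ) else 0)) := by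
        rw [MeasureTheory.integral_finset_sum]
        intro v _
        exact (((hint1 v).const_mul 2).add (hint2 v)).const_mul (x v)
    _ ≤ ∫ t in A, (2:ℝ) := by
        apply MeasureTheory.setIntegral_mono_on hintsum
          (integrableOn_const (C := (2:ℝ)) hAvol.ne) hAmeas
        intro t ht
        rw [hsum t]
        exact hxT (St t) (hstable t ht)
    _ = u := by
        rw [MeasureTheory.setIntegral_const, smul_eq_mul, hA, measureReal_def, Real.volume_Ioc,
          ENNReal.toReal_ofReal (by linarith)]
        ring

/-- Linear description of `P^{≤2}(G)`: it is the set of nonnegative `x` with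
`2 x(T) + x(N̄(T)) ≤ 2` for every stable set `T`. -/
theorem cliquePolytopeLE2_description {V : Type*} [Fintype V] (G : SimpleGraph V) :
    cliquePolytopeLE2 G =
      {x : V → ℝ | (∀ v, 0 ≤ x v) ∧
        ∀ T : Finset V, IsStableSet G T →
          2 * ∑ v ∈ T, x v + ∑ v ∈ nonNbhd G T, x v ≤ 2} := by
  classical
  set S : Set (V → ℝ) := {x : V → ℝ | ∃ C : Finset V, C.card ≤ 2 ∧
    (∀ u ∈ C, ∀ v ∈ C, u ≠ v → G.Adj u v) ∧
    x = fun v => if v ∈ C then 1 else 0} with hS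
  set Q : Set (V → ℝ) := {x : V → ℝ | (∀ v, 0 ≤ x v) ∧
        ∀ T : Finset V, IsStableSet G T →
          2 * ∑ v ∈ T, x v + ∑ v ∈ nonNbhd G T, x v ≤ 2} with hQ
  have hSsub : S ⊆ Q := by
    rintro _ ⟨C, hC2, hCcl, rfl⟩
    constructor
    · intro v; dsimp only; split <;> norm_num
    · intro T hT
      have s1 : ∑ v ∈ T, (if v ∈ C then (1:ℝ) else 0) = ((T ∩ C).card : ℝ) := by
        rw [Finset.sum_ite_mem, Finset.sum_const, nsmul_eq_mul, mul_one]
      have s2 : ∑ v ∈ nonNbhd G T, (if v ∈ C then (1:ℝ) else 0)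
          = (((nonNbhd G T) ∩ C).card : ℝ) := by
        rw [Finset.sum_ite_mem, Finset.sum_const, nsmul_eq_mul, mul_one]
      rw [s1, s2]
      by_cases hTC : T ∩ C = ∅
      · rw [hTC]
        have : ((nonNbhd G T) ∩ C).card ≤ 2 :=
          le_trans (Finset.card_le_card Finset.inter_subset_right) hC2
        have : (((nonNbhd G T) ∩ C).card : ℝ) ≤ 2 := by exact_mod_cast this
        simp only [Finset.card_empty, Nat.cast_zero]
        linarith
      · obtain ⟨w, hw⟩ := Finset.nonempty_iff_ne_empty.mpr hTC
        have hwT : w ∈ T := (Finset.mem_inter.mp hw).1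
        have hwC : w ∈ C := (Finset.mem_inter.mp hw).2
        have hTCeq : T ∩ C = {w} := by
          apply Finset.eq_singleton_iff_unique_mem.mpr
          refine ⟨hw, fun w' hw' => ?_⟩
          by_contra hne
          exact hT w hwT w' (Finset.mem_inter.mp hw').1
            (hCcl w hwC w' (Finset.mem_inter.mp hw').2 (Ne.symm hne))
        have hNC : (nonNbhd G T) ∩ C = ∅ := by
          rw [Finset.eq_empty_iff_forall_notMem]
          intro v hv
          have hvN : v ∈ nonNbhd G T := (Finset.mem_inter.mp hv).1
          have hvC : v ∈ C := (Finset.mem_inter.mp hv).2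
          have hprop := (Finset.mem_filter.mp hvN).2
          have hvw : v ≠ w := fun h => hprop.1 (h ▸ hwT)
          exact hprop.2 w hwT (hCcl w hwC v hvC (Ne.symm hvw))
        rw [hTCeq, hNC]
        norm_num
  have hQconv : Convex ℝ Q := by
    intro y hy z hz a b ha hb hab
    refine ⟨fun v => ?_, fun T hT => ?_⟩
    · have := hy.1 v; have := hz.1 v
      simp only [Pi.add_apply, Pi.smul_apply, smul_eq_mul]
      nlinarith
    · have hyT := hy.2 T hT
      have hzT := hz.2 T hT
      simp only [Pi.add_apply, Pi.smul_apply, smul_eq_mul]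
      rw [Finset.sum_add_distrib, Finset.sum_add_distrib,
        ← Finset.mul_sum, ← Finset.mul_sum, ← Finset.mul_sum, ← Finset.mul_sum]
      nlinarith
  apply Set.Subset.antisymm
  · exact convexHull_min hSsub hQconv
  · intro x hx
    by_contra hmem
    have hSfin : S.Finite := by
      apply Set.Finite.subset
        (Set.finite_range (fun C : Finset V => fun v => if v ∈ C then (1:ℝ) else 0))
      rintro _ ⟨C, _, _, rfl⟩
      exact ⟨C, rfl⟩
    obtain ⟨f, u, hfu, hux⟩ := geometric_hahn_banach_closed_point
      (convex_convexHull ℝ S) (hSfin.isClosed_convexHull ℝ) hmem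
    set c : V → ℝ := fun v => f (fun j => if v = j then (1:ℝ) else 0) with hc
    have hf : ∀ y : V → ℝ, f y = ∑ v, y v * c v := by
      intro y
      conv_lhs => rw [pi_eq_sum_univ y]
      rw [map_sum]
      apply Finset.sum_congr rfl
      intro v _
      rw [map_smul, smul_eq_mul]
    have hchi : ∀ C : Finset V, f (fun v => if v ∈ C then (1:ℝ) else 0) = ∑ v ∈ C, c v := by
      intro C
      rw [hf]
      have he : ∀ v, (if v ∈ C then (1:ℝ) else 0) * c v = if v ∈ C then c v else 0 := by
        intro v; split <;> simp
      simp_rw [he]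
      rw [Finset.sum_ite_mem, Finset.univ_inter]
    have h0 : (0:ℝ) < u := by
      have := hfu _ (subset_convexHull ℝ S ⟨∅, by simp, by simp, rfl⟩)
      rw [hchi ∅] at this
      simpa using this
    have hcv : ∀ v, c v < u := by
      intro v
      have := hfu _ (subset_convexHull ℝ S ⟨{v}, by simp, by simp, rfl⟩)
      rw [hchi {v}] at this
      simpa using this
    have hadj : ∀ a b, G.Adj a b → c a + c b < u := by
      intro a b hab
      have hne : a ≠ b := G.ne_of_adj hab
      have hcl : ∀ u' ∈ ({a, b} : Finset V), ∀ v' ∈ ({a, b} : Finset V),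
          u' ≠ v' → G.Adj u' v' := by
        intro u' hu' v' hv' hne'
        rcases Finset.mem_insert.mp hu' with rfl | hu'
        · rcases Finset.mem_insert.mp hv' with rfl | hv'
          · exact absurd rfl hne'
          · rw [Finset.mem_singleton] at hv'; subst hv'; exact hab
        · rw [Finset.mem_singleton] at hu'; subst hu'
          rcases Finset.mem_insert.mp hv' with rfl | hv'
          · exact hab.symm
          · rw [Finset.mem_singleton] at hv'; subst hv'; exact absurd rfl hne'
      have := hfu _ (subset_convexHull ℝ S ⟨{a, b}, Finset.card_insert_le a {b} |>.trans (by simp), hcl, rfl⟩)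
      rw [hchi {a, b}, Finset.sum_insert (by simpa using hne), Finset.sum_singleton] at this
      exact this
    have hxc : u < ∑ v, x v * c v := by rw [← hf]; exact hux
    have := key_ineq G x c u h0 hcv hadj hx.1 hx.2
    linarith
end

section
/- Let G = (V,E) be a graph and T ⊆ V a stable set. The inequality 2·x(T) + x(N̄(T)) ≤ 2 defines a facet of P^{≤2}(G) if and only if the subgraph of G induced by N̄(T) has no bipartite connected component. -/
open scoped Classical
open Finset

set_option linter.unusedSectionVars false
set_option maxHeartbeats 1600000

section FacetAux

variable {V : Type*} [Fintype V]

/-- Dot product with a fixed coefficient vector, as a linear functional. -/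
noncomputable def dotL (a : V → ℝ) : (V → ℝ) →ₗ[ℝ] ℝ where
  toFun x := ∑ v, a v * x v
  map_add' x y := by simp [mul_add, Finset.sum_add_distrib]
  map_smul' c x := by
    simp only [Pi.smul_apply, smul_eq_mul, RingHom.id_apply, Finset.mul_sum]
    exact Finset.sum_congr rfl fun v _ => by ring

lemma dotL_single (a : V → ℝ) (v : V) : dotL a (Pi.single v 1) = a v := by
  simp only [dotL, LinearMap.coe_mk, AddHom.coe_mk]
  rw [Finset.sum_eq_single v]
  · simp
  · intro w _ hw
    simp [Pi.single_apply, hw]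
  · simp

/-- characteristic vector of a finite set -/
noncomputable def chiv (C : Finset V) : V → ℝ := fun v => if v ∈ C then 1 else 0

lemma dotL_chiv (a : V → ℝ) (C : Finset V) : dotL a (chiv C) = ∑ v ∈ C, a v := by
  simp only [dotL, chiv, LinearMap.coe_mk, AddHom.coe_mk, mul_ite, mul_one, mul_zero]
  rw [Finset.sum_ite_mem, Finset.univ_inter]

lemma chiv_singleton (v : V) : chiv ({v} : Finset V) = Pi.single v 1 := by
  funext w
  simp [chiv, Pi.single_apply]

lemma chiv_pair {u v : V} (huv : u ≠ v) :
    chiv ({u, v} : Finset V) = Pi.single u 1 + Pi.single v 1 := by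
  funext w
  simp only [chiv, Finset.mem_insert, Finset.mem_singleton, Pi.add_apply, Pi.single_apply]
  by_cases h1 : w = u <;> by_cases h2 : w = v <;> simp_all

/-- A face of a convex hull cut out by a valid linear inequality is the convex hull of the
points lying on the corresponding hyperplane. -/
lemma face_convexHull {E : Type*} [AddCommGroup E] [Module ℝ E] (A : Set E)
    (f : E →ₗ[ℝ] ℝ) (c : ℝ) (hA : ∀ a ∈ A, f a ≤ c) :
    {x ∈ convexHull ℝ A | f x = c} = convexHull ℝ {a ∈ A | f a = c} := by
  apply Set.Subset.antisymm
  · rintro x ⟨hx, hfx⟩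
    rw [_root_.convexHull_eq] at hx
    obtain ⟨ι, t, w, z, hw0, hw1, hz, hx⟩ := hx
    rw [Finset.centerMass_eq_of_sum_1 _ _ hw1] at hx
    have hfx' : ∑ i ∈ t, w i * f (z i) = c := by
      rw [← hfx, ← hx, map_sum]
      exact Finset.sum_congr rfl fun i _ => by rw [map_smul, smul_eq_mul]
    have hzero : ∀ i ∈ t, w i * (c - f (z i)) = 0 := by
      rw [← Finset.sum_eq_zero_iff_of_nonneg
        (fun i hi => mul_nonneg (hw0 i hi) (sub_nonneg.mpr (hA _ (hz i hi))))]
      have : ∑ i ∈ t, w i * (c - f (z i)) = (∑ i ∈ t, w i) * c - ∑ i ∈ t, w i * f (z i) := by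
        rw [Finset.sum_mul, ← Finset.sum_sub_distrib]
        exact Finset.sum_congr rfl fun i _ => by ring
      rw [this, hw1, hfx', one_mul, sub_self]
    set t' := t.filter (fun i => w i ≠ 0) with ht'
    have hsum' : ∑ i ∈ t', w i = 1 := by
      rw [ht', Finset.sum_filter_ne_zero, hw1]
    have hx' : t'.centerMass w z = x := by
      rw [Finset.centerMass_eq_of_sum_1 _ _ hsum', ← hx]
      apply Finset.sum_filter_of_ne
      intro i _ h hw
      exact h (by rw [hw, zero_smul])
    rw [← hx']
    apply Finset.centerMass_mem_convexHull
    · exact fun i hi => hw0 i (Finset.mem_filter.mp hi).1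
    · rw [hsum']; norm_num
    · intro i hi
      obtain ⟨hit, hwi⟩ := Finset.mem_filter.mp hi
      refine ⟨hz i hit, ?_⟩
      have := hzero i hit
      rcases mul_eq_zero.mp this with h | h
      · exact absurd h hwi
      · linarith [sub_eq_zero.mp h]
  · apply convexHull_min
    · rintro x ⟨hxA, hfx⟩
      exact ⟨subset_convexHull ℝ A hxA, hfx⟩
    · exact ((convex_convexHull ℝ A).inter (convex_hyperplane f.isLinear c))

/-- If a connected graph is not 2-colorable, then the characteristic vectors of its edges
span the whole space. -/
lemma single_mem_span_edges {W : Type*} [Fintype W] (H : SimpleGraph W)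
    (hpre : H.Preconnected) (hn : ¬ H.Colorable 2) (w₀ : W) :
    Pi.single w₀ (1:ℝ) ∈ Submodule.span ℝ
      {x : W → ℝ | ∃ u v, H.Adj u v ∧ x = Pi.single u 1 + Pi.single v 1} := by
  by_contra hnot
  set p := Submodule.span ℝ
      {x : W → ℝ | ∃ u v, H.Adj u v ∧ x = Pi.single u 1 + Pi.single v 1} with hp
  obtain ⟨f, hf0, hfbot⟩ := Submodule.exists_dual_map_eq_bot_of_notMem hnot inferInstance
  have hker : ∀ x ∈ p, f x = 0 := by
    intro x hx
    have : f x ∈ p.map f := Submodule.mem_map_of_mem hx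
    rw [hfbot] at this
    exact (Submodule.mem_bot ℝ).mp this
  set g : W → ℝ := fun w => f (Pi.single w 1) with hg
  have hedge : ∀ u v : W, H.Adj u v → g u + g v = 0 := by
    intro u v huv
    have hmem : Pi.single u (1:ℝ) + Pi.single v 1 ∈ p :=
      Submodule.subset_span ⟨u, v, huv, rfl⟩
    have := hker _ hmem
    rwa [map_add] at this
  have hg0 : g w₀ ≠ 0 := hf0
  have hwalk : ∀ (u v : W), H.Walk u v → g u ≠ 0 → g v ≠ 0 := by
    intro u v q
    induction q with
    | nil => exact id
    | cons h q ih =>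
      intro hu
      apply ih
      have := hedge _ _ h
      intro hmid
      rw [hmid] at this
      simp at this
      exact hu this
  have hgall : ∀ v, g v ≠ 0 := by
    intro v
    obtain ⟨q⟩ := hpre w₀ v
    exact hwalk _ _ q hg0
  apply hn
  refine ⟨SimpleGraph.Coloring.mk (fun w => if 0 < g w then 0 else 1) ?_⟩
  intro u v huv heq
  have hsum := hedge _ _ huv
  have hu := hgall u
  have hv := hgall v
  by_cases h1 : 0 < g u <;> by_cases h2 : 0 < g v <;> simp [h1, h2] at heq <;> try linarith
  · push_neg at h1 h2
    have : g u < 0 := lt_of_le_of_ne h1 hu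
    have : g v < 0 := lt_of_le_of_ne h2 hv
    linarith

/-- Extension-by-zero of functions along a map, as a linear map. -/
noncomputable def extL {W : Type*} [Fintype W] (ι : W → V) : (W → ℝ) →ₗ[ℝ] (V → ℝ) where
  toFun x := ∑ w, x w • (Pi.single (ι w) 1 : V → ℝ)
  map_add' x y := by
    rw [← Finset.sum_add_distrib]
    exact Finset.sum_congr rfl fun w _ => by rw [Pi.add_apply, add_smul]
  map_smul' c x := by
    rw [RingHom.id_apply, Finset.smul_sum]
    exact Finset.sum_congr rfl fun w _ => by rw [Pi.smul_apply, smul_smul, smul_eq_mul]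

lemma extL_single {W : Type*} [Fintype W] (ι : W → V) (w : W) :
    extL ι (Pi.single w (1:ℝ)) = Pi.single (ι w) 1 := by
  simp only [extL, LinearMap.coe_mk, AddHom.coe_mk]
  rw [Finset.sum_eq_single w]
  · simp
  · intro w' _ hw'
    rw [Pi.single_apply, if_neg hw', zero_smul]
  · simp

lemma extL_edge {W : Type*} [Fintype W] (ι : W → V) (hinj : Function.Injective ι)
    (u v : W) (huv : u ≠ v) :
    extL ι (Pi.single u (1:ℝ) + Pi.single v 1) = chiv ({ι u, ι v} : Finset V) := by
  rw [map_add, extL_single, extL_single, chiv_pair (fun h => huv (hinj h))]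

/-- The graph induced on the support of a connected component is preconnected. -/
lemma comp_induce_preconnected {W : Type*} (Gi : SimpleGraph W) (c : Gi.ConnectedComponent) :
    (Gi.induce c.supp).Preconnected := by
  have key : ∀ (x y : W) (_ : Gi.Walk x y) (hx : x ∈ c.supp) (hy : y ∈ c.supp),
      (Gi.induce c.supp).Reachable ⟨x, hx⟩ ⟨y, hy⟩ := by
    intro x y q
    induction q with
    | nil => intro hx hy; rfl
    | @cons x z y h q ih =>
      intro hx hy
      have hz : z ∈ c.supp := by
        rw [SimpleGraph.ConnectedComponent.mem_supp_iff] at hx ⊢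
        rw [← hx]
        exact (SimpleGraph.ConnectedComponent.connectedComponentMk_eq_of_adj h).symm
      have step : (Gi.induce c.supp).Adj ⟨x, hx⟩ ⟨z, hz⟩ := by
        simp only [SimpleGraph.comap_adj, Function.Embedding.coe_subtype]
        exact h
      exact step.reachable.trans (ih hz hy)
  rintro ⟨x, hx⟩ ⟨y, hy⟩
  have : Gi.Reachable x y := by
    apply SimpleGraph.ConnectedComponent.exact
    rw [SimpleGraph.ConnectedComponent.mem_supp_iff] at hx hy
    rw [hx, hy]
  obtain ⟨q⟩ := this
  exact key x y q hx hy

/-- A graph with no edges is 2-colorable. -/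
lemma colorable_of_no_edges {W : Type*} (H : SimpleGraph W)
    (h : ∀ u v : W, ¬ H.Adj u v) : H.Colorable 2 :=
  ⟨SimpleGraph.Coloring.mk (fun _ => 0) (fun {u v} huv => absurd huv (h u v))⟩

variable (G : SimpleGraph V) (T : Finset V)

lemma mem_nonNbhd {v : V} : v ∈ nonNbhd G T ↔ v ∉ T ∧ ∀ u ∈ T, ¬ G.Adj u v := by
  simp [nonNbhd]

/-- The coefficient vector of the inequality `2 x(T) + x(N̄(T)) ≤ 2`. -/
noncomputable def fc : V → ℝ := fun v =>
  if v ∈ T then 2 else if v ∈ nonNbhd G T then 1 else 0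

lemma fc_T {v : V} (h : v ∈ T) : fc G T v = 2 := by simp [fc, h]

lemma fc_N {v : V} (h : v ∈ nonNbhd G T) : fc G T v = 1 := by
  have hvT : v ∉ T := ((mem_nonNbhd G T).mp h).1
  simp [fc, hvT, h]

lemma fc_other {v : V} (h1 : v ∉ T) (h2 : v ∉ nonNbhd G T) : fc G T v = 0 := by
  simp [fc, h1, h2]

lemma dotL_fc (x : V → ℝ) :
    dotL (fc G T) x = 2 * ∑ v ∈ T, x v + ∑ v ∈ nonNbhd G T, x v := by
  have key : ∀ v, fc G T v * x v =
      (if v ∈ T then 2 * x v else 0) + (if v ∈ nonNbhd G T then x v else 0) := by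
    intro v
    by_cases h1 : v ∈ T
    · have h2 : v ∉ nonNbhd G T := fun h => ((mem_nonNbhd G T).mp h).1 h1
      rw [fc_T G T h1, if_pos h1, if_neg h2, add_zero]
    · by_cases h2 : v ∈ nonNbhd G T
      · rw [fc_N G T h2, if_neg h1, if_pos h2, one_mul, zero_add]
      · rw [fc_other G T h1 h2, if_neg h1, if_neg h2, add_zero, zero_mul]
  show ∑ v, fc G T v * x v = _
  rw [Finset.sum_congr rfl fun v _ => key v, Finset.sum_add_distrib,
    Finset.sum_ite_mem, Finset.univ_inter, Finset.sum_ite_mem, Finset.univ_inter,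
    Finset.mul_sum]

lemma fc_sum_le (hT : IsStableSet G T) {C : Finset V} (hcard : C.card ≤ 2)
    (hclq : ∀ u ∈ C, ∀ v ∈ C, u ≠ v → G.Adj u v) : ∑ v ∈ C, fc G T v ≤ 2 := by
  have hle2 : ∀ v : V, fc G T v ≤ 2 := by
    intro v; unfold fc; split_ifs <;> norm_num
  rcases lt_or_eq_of_le hcard with hlt | heq
  · interval_cases h : C.card
    · rw [Finset.card_eq_zero.mp h, Finset.sum_empty]; norm_num
    · obtain ⟨u, rfl⟩ := Finset.card_eq_one.mp h
      rw [Finset.sum_singleton]; exact hle2 u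
  · obtain ⟨u, v, hne, rfl⟩ := Finset.card_eq_two.mp heq
    have hadj : G.Adj u v := hclq u (by simp) v (by simp) hne
    rw [Finset.sum_pair hne]
    by_cases hu : u ∈ T
    · have hv1 : v ∉ T := fun hv => hT u hu v hv hadj
      have hv2 : v ∉ nonNbhd G T := fun h => ((mem_nonNbhd G T).mp h).2 u hu hadj
      rw [fc_T G T hu, fc_other G T hv1 hv2]; norm_num
    · by_cases hv : v ∈ T
      · have hu2 : u ∉ nonNbhd G T := fun h => ((mem_nonNbhd G T).mp h).2 v hv hadj.symm
        rw [fc_T G T hv, fc_other G T hu hu2]; norm_num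
      · have h1 : fc G T u ≤ 1 := by unfold fc; rw [if_neg hu]; split_ifs <;> norm_num
        have h2 : fc G T v ≤ 1 := by unfold fc; rw [if_neg hv]; split_ifs <;> norm_num
        linarith

/-- The set of vertices of `P^{≤2}(G)` lying on the hyperplane `2 x(T) + x(N̄(T)) = 2`. -/
def tightSet : Set (V → ℝ) :=
  {x : V → ℝ | (∃ C : Finset V, C.card ≤ 2 ∧
      (∀ u ∈ C, ∀ v ∈ C, u ≠ v → G.Adj u v) ∧
      x = fun v => if v ∈ C then 1 else 0) ∧ dotL (fc G T) x = 2}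

lemma chiv_mem_tightSet {C : Finset V} (hcard : C.card ≤ 2)
    (hclq : ∀ u ∈ C, ∀ v ∈ C, u ≠ v → G.Adj u v)
    (hsum : ∑ v ∈ C, fc G T v = 2) : chiv C ∈ tightSet G T := by
  refine ⟨⟨C, hcard, hclq, rfl⟩, ?_⟩
  rw [dotL_chiv]; exact hsum

lemma singleton_mem_tightSet {t : V} (ht : t ∈ T) : chiv ({t} : Finset V) ∈ tightSet G T := by
  apply chiv_mem_tightSet
  · simp
  · intro u hu v hv huv
    simp only [Finset.mem_singleton] at hu hv
    exact absurd (hu.trans hv.symm) huv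
  · rw [Finset.sum_singleton, fc_T G T ht]

lemma pairT_mem_tightSet (hT : IsStableSet G T) {t w : V} (ht : t ∈ T) (hadj : G.Adj t w) :
    chiv ({t, w} : Finset V) ∈ tightSet G T := by
  have hne : t ≠ w := G.ne_of_adj hadj
  apply chiv_mem_tightSet
  · exact (Finset.card_insert_le _ _).trans (by simp)
  · intro u hu v hv huv
    simp only [Finset.mem_insert, Finset.mem_singleton] at hu hv
    rcases hu with rfl | rfl <;> rcases hv with rfl | rfl
    · exact absurd rfl huv
    · exact hadj
    · exact hadj.symm
    · exact absurd rfl huv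
  · have hw1 : w ∉ T := fun hw => hT t ht w hw hadj
    have hw2 : w ∉ nonNbhd G T := fun h => ((mem_nonNbhd G T).mp h).2 t ht hadj
    rw [Finset.sum_pair hne, fc_T G T ht, fc_other G T hw1 hw2, add_zero]

lemma pairN_mem_tightSet {u v : V} (hu : u ∈ nonNbhd G T) (hv : v ∈ nonNbhd G T)
    (hadj : G.Adj u v) : chiv ({u, v} : Finset V) ∈ tightSet G T := by
  have hne : u ≠ v := G.ne_of_adj hadj
  apply chiv_mem_tightSet
  · exact (Finset.card_insert_le _ _).trans (by simp)
  · intro x hx y hy hxy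
    simp only [Finset.mem_insert, Finset.mem_singleton] at hx hy
    rcases hx with rfl | rfl <;> rcases hy with rfl | rfl
    · exact absurd rfl hxy
    · exact hadj
    · exact hadj.symm
    · exact absurd rfl hxy
  · rw [Finset.sum_pair hne, fc_N G T hu, fc_N G T hv]; norm_num

lemma tight_cases {C : Finset V} (hcard : C.card ≤ 2)
    (hclq : ∀ u ∈ C, ∀ v ∈ C, u ≠ v → G.Adj u v)
    (hsum : ∑ v ∈ C, fc G T v = 2) :
    (∃ t ∈ C, t ∈ T) ∨
      ∃ u v, u ≠ v ∧ C = {u, v} ∧ u ∈ nonNbhd G T ∧ v ∈ nonNbhd G T ∧ G.Adj u v := by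
  by_cases hTC : ∃ t ∈ C, t ∈ T
  · exact Or.inl hTC
  · right
    push_neg at hTC
    have hfc : ∀ v ∈ C, fc G T v = if v ∈ nonNbhd G T then 1 else 0 := by
      intro v hv
      by_cases h : v ∈ nonNbhd G T
      · rw [fc_N G T h, if_pos h]
      · rw [fc_other G T (hTC v hv) h, if_neg h]
    rw [Finset.sum_congr rfl hfc, Finset.sum_boole] at hsum
    have hcard2 : (C.filter (fun v => v ∈ nonNbhd G T)).card = 2 := by
      exact_mod_cast hsum
    have hsub : C.filter (fun v => v ∈ nonNbhd G T) ⊆ C := Finset.filter_subset _ _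
    have hCeq : C.filter (fun v => v ∈ nonNbhd G T) = C :=
      Finset.eq_of_subset_of_card_le hsub (by omega)
    have hC2 : C.card = 2 := by rw [← hCeq]; exact hcard2
    obtain ⟨u, v, hne, rfl⟩ := Finset.card_eq_two.mp hC2
    refine ⟨u, v, hne, rfl, ?_, ?_, hclq u (by simp) v (by simp) hne⟩
    · have : u ∈ Finset.filter (fun v => v ∈ nonNbhd G T) {u, v} := by rw [hCeq]; simp
      exact (Finset.mem_filter.mp this).2
    · have : v ∈ Finset.filter (fun v => v ∈ nonNbhd G T) {u, v} := by rw [hCeq]; simp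
      exact (Finset.mem_filter.mp this).2

end FacetAux

/-- For a stable set `T`, the inequality `2 x(T) + x(N̄(T)) ≤ 2` defines a facet of
`P^{≤2}(G)` if and only if the subgraph of `G` induced by `N̄(T)` has no bipartite
connected component. -/
theorem cliquePolytopeLE2_facet_iff {V : Type*} [Fintype V] [Nonempty V]
    (G : SimpleGraph V) (T : Finset V) (hT : IsStableSet G T) :
    ((({x ∈ cliquePolytopeLE2 G |
          2 * ∑ v ∈ T, x v + ∑ v ∈ nonNbhd G T, x v = 2} : Set (V → ℝ))).Nonempty ∧
      Module.finrank ℝ ↥(vectorSpan ℝ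
        {x ∈ cliquePolytopeLE2 G |
          2 * ∑ v ∈ T, x v + ∑ v ∈ nonNbhd G T, x v = 2}) = Fintype.card V - 1)
      ↔ ∀ c : (G.induce (↑(nonNbhd G T) : Set V)).ConnectedComponent,
          ¬ ((G.induce (↑(nonNbhd G T) : Set V)).induce c.supp).Colorable 2 := by
  classical
  set A : Set (V → ℝ) := {x : V → ℝ | ∃ C : Finset V, C.card ≤ 2 ∧
    (∀ u ∈ C, ∀ v ∈ C, u ≠ v → G.Adj u v) ∧
    x = fun v => if v ∈ C then 1 else 0} with hAdef
  set S : Set (V → ℝ) := tightSet G T with hSdef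
  have hvalid : ∀ p ∈ A, dotL (fc G T) p ≤ 2 := by
    rintro p ⟨C, hcard, hclq, rfl⟩
    show dotL (fc G T) (chiv C) ≤ 2
    rw [dotL_chiv]
    exact fc_sum_le G T hT hcard hclq
  have hface : {x ∈ cliquePolytopeLE2 G |
      2 * ∑ v ∈ T, x v + ∑ v ∈ nonNbhd G T, x v = 2} = convexHull ℝ S := by
    have h1 : {x ∈ cliquePolytopeLE2 G |
        2 * ∑ v ∈ T, x v + ∑ v ∈ nonNbhd G T, x v = 2}
        = {x ∈ convexHull ℝ A | dotL (fc G T) x = 2} := by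
      ext x
      rw [Set.mem_sep_iff, Set.mem_sep_iff, dotL_fc]
      exact Iff.rfl
    rw [h1, face_convexHull A (dotL (fc G T)) 2 hvalid]
    rfl
  rw [hface]
  have hvs : vectorSpan ℝ (convexHull ℝ S) = vectorSpan ℝ S := by
    rw [← direction_affineSpan, affineSpan_convexHull, direction_affineSpan]
  rw [hvs, convexHull_nonempty_iff]
  -- the member-of-S elimination
  have hS_elim : ∀ p ∈ S, ∃ C : Finset V, C.card ≤ 2 ∧
      (∀ u ∈ C, ∀ v ∈ C, u ≠ v → G.Adj u v) ∧ (∑ v ∈ C, fc G T v = 2) ∧ p = chiv C := by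
    rintro p ⟨⟨C, hcard, hclq, rfl⟩, hdot⟩
    refine ⟨C, hcard, hclq, ?_, rfl⟩
    rw [← dotL_chiv]
    exact hdot
  have hS_dot : ∀ p ∈ S, dotL (fc G T) p = 2 := fun p hp => hp.2
  have hvs_le : ∀ (g : V → ℝ) (r : ℝ), (∀ p ∈ S, dotL g p = r) →
      vectorSpan ℝ S ≤ LinearMap.ker (dotL g) := by
    intro g r hr
    apply Submodule.span_le.mpr
    rintro x ⟨p, hp, q, hq, rfl⟩
    rw [SetLike.mem_coe, LinearMap.mem_ker]
    show dotL g (p - q) = 0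
    rw [map_sub, hr p hp, hr q hq, sub_self]
  have hvs_le_a : vectorSpan ℝ S ≤ LinearMap.ker (dotL (fc G T)) := hvs_le _ 2 hS_dot
  have hT0 : T = ∅ → nonNbhd G T = Finset.univ := by
    intro h
    ext v
    simp [nonNbhd, h]
  have haNe : ∃ v, fc G T v ≠ 0 := by
    rcases T.eq_empty_or_nonempty with hTe | ⟨t, ht⟩
    · have hv : (Classical.arbitrary V) ∈ nonNbhd G T := by rw [hT0 hTe]; simp
      exact ⟨_, by rw [fc_N G T hv]; norm_num⟩
    · exact ⟨t, by rw [fc_T G T ht]; norm_num⟩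
  have hker_rank : ∀ (g : V → ℝ), (∃ v, g v ≠ 0) →
      Module.finrank ℝ (LinearMap.ker (dotL g)) = Fintype.card V - 1 := by
    rintro g ⟨v₁, hv₁⟩
    have hsurj : Function.Surjective (dotL g) := by
      intro r
      refine ⟨(r / g v₁) • (Pi.single v₁ 1 : V → ℝ), ?_⟩
      rw [map_smul, dotL_single, smul_eq_mul]
      field_simp
    have hrn := LinearMap.finrank_range_add_finrank_ker (dotL g)
    rw [LinearMap.range_eq_top.mpr hsurj, finrank_top, Module.finrank_self,
      Module.finrank_pi] at hrn
    omega
  constructor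
  · rintro ⟨hne, hdim⟩ c hcol
    obtain ⟨col⟩ := hcol
    obtain ⟨w₀, hw₀⟩ := c.exists_rep
    have hw₀supp : w₀ ∈ c.supp := hw₀
    set ι : c.supp → V := fun w => ((w : {x // x ∈ (↑(nonNbhd G T) : Set V)}) : V) with hι
    have hι_inj : Function.Injective ι := by
      intro w w' h
      exact Subtype.ext (Subtype.ext h)
    set g : V → ℝ := fun v =>
      if h : ∃ w : c.supp, ι w = v then (if col h.choose = 0 then 1 else -1) else 0 with hg
    have hg_im : ∀ w : c.supp, g (ι w) = if col w = 0 then 1 else -1 := by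
      intro w
      have hex : ∃ w' : c.supp, ι w' = ι w := ⟨w, rfl⟩
      have hch : hex.choose = w := hι_inj hex.choose_spec
      rw [hg]
      simp only [dif_pos hex, hch]
    have hg_notim : ∀ v, (¬ ∃ w : c.supp, ι w = v) → g v = 0 := by
      intro v h
      rw [hg]
      exact dif_neg h
    have hval : ∀ i j : Fin 2, i ≠ j →
        (if i = 0 then (1:ℝ) else -1) + (if j = 0 then 1 else -1) = 0 := by
      intro i j hij
      fin_cases i <;> fin_cases j <;> simp_all <;> norm_num
    have hvalne : ∀ i j : Fin 2, i ≠ j →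
        (if i = 0 then (1:ℝ) else -1) ≠ (if j = 0 then 1 else -1) := by
      intro i j hij
      fin_cases i <;> fin_cases j <;> simp_all <;> norm_num
    have him_N : ∀ w : c.supp, ι w ∈ nonNbhd G T := fun w =>
      (w : {x // x ∈ (↑(nonNbhd G T) : Set V)}).2
    have hadj_supp : ∀ (w : c.supp) (v : V) (hvN : v ∈ (↑(nonNbhd G T) : Set V)),
        G.Adj (ι w) v → ∃ w' : c.supp, ι w' = v ∧
          ((G.induce (↑(nonNbhd G T) : Set V)).induce c.supp).Adj w w' := by
      intro w v hvN hadj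
      have hadj_i : (G.induce (↑(nonNbhd G T) : Set V)).Adj (w : _) ⟨v, hvN⟩ := hadj
      have hvsupp : (⟨v, hvN⟩ : {x // x ∈ (↑(nonNbhd G T) : Set V)}) ∈ c.supp := by
        rw [SimpleGraph.ConnectedComponent.mem_supp_iff]
        rw [← (SimpleGraph.ConnectedComponent.connectedComponentMk_eq_of_adj hadj_i)]
        exact (w.2 : _)
      exact ⟨⟨⟨v, hvN⟩, hvsupp⟩, rfl, hadj_i⟩
    have hvanish : ∀ p ∈ S, dotL g p = 0 := by
      intro p hp
      obtain ⟨C, hcard, hclq, hsum, rfl⟩ := hS_elim p hp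
      rw [dotL_chiv]
      rcases tight_cases G T hcard hclq hsum with ⟨t, htC, htT⟩ | ⟨u, v, hne', rfl, huN, hvN, hadj⟩
      · apply Finset.sum_eq_zero
        intro v hv
        apply hg_notim
        rintro ⟨w, rfl⟩
        have hwN := him_N w
        rcases eq_or_ne (ι w) t with h | h
        · exact ((mem_nonNbhd G T).mp hwN).1 (h ▸ htT)
        · exact ((mem_nonNbhd G T).mp hwN).2 t htT (hclq t htC _ hv (Ne.symm h))
      · rw [Finset.sum_pair hne']
        by_cases hu : ∃ w : c.supp, ι w = u
        · obtain ⟨wu, rfl⟩ := hu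
          obtain ⟨wv, hwv, hadj'⟩ := hadj_supp wu v hvN hadj
          rw [hg_im wu, ← hwv, hg_im wv]
          exact hval _ _ (col.valid hadj')
        · by_cases hv : ∃ w : c.supp, ι w = v
          · obtain ⟨wv, rfl⟩ := hv
            obtain ⟨wu, hwu, _⟩ := hadj_supp wv u huN hadj.symm
            exact absurd ⟨wu, hwu⟩ hu
          · rw [hg_notim u hu, hg_notim v hv, add_zero]
    have hvs_le_g : vectorSpan ℝ S ≤ LinearMap.ker (dotL g) := hvs_le _ 0 hvanish
    set wk : c.supp := ⟨w₀, hw₀supp⟩ with hwk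
    have hgk : g (ι wk) ≠ 0 := by
      rw [hg_im]
      split_ifs <;> norm_num
    have hak : fc G T (ι wk) = 1 := fc_N G T (him_N wk)
    obtain ⟨x, hxa, hxg⟩ : ∃ x, dotL (fc G T) x = 0 ∧ dotL g x ≠ 0 := by
      by_cases hout : ∃ u, (¬ ∃ w : c.supp, ι w = u) ∧ fc G T u ≠ 0
      · obtain ⟨u, hu1, hu2⟩ := hout
        refine ⟨fc G T u • (Pi.single (ι wk) 1 : V → ℝ) - Pi.single u 1, ?_, ?_⟩
        · rw [map_sub, map_smul, dotL_single, dotL_single, smul_eq_mul, hak]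
          ring
        · rw [map_sub, map_smul, dotL_single, dotL_single, smul_eq_mul, hg_notim u hu1,
            sub_zero]
          exact mul_ne_zero hu2 hgk
      · push_neg at hout
        by_cases hgc : ∃ w w' : c.supp, g (ι w) ≠ g (ι w')
        · obtain ⟨w, w', hww⟩ := hgc
          refine ⟨Pi.single (ι w) 1 - Pi.single (ι w') 1, ?_, ?_⟩
          · rw [map_sub, dotL_single, dotL_single, fc_N G T (him_N w), fc_N G T (him_N w'),
              sub_self]
          · rw [map_sub, dotL_single, dotL_single]
            exact sub_ne_zero.mpr hww
        · exfalso
          push_neg at hgc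
          obtain ⟨p, hp⟩ := hne
          obtain ⟨C, hcard, hclq, hsum, rfl⟩ := hS_elim p hp
          rcases tight_cases G T hcard hclq hsum with ⟨t, htC, htT⟩ |
            ⟨u, v, hne', rfl, huN, hvN, hadj⟩
          · have hat : fc G T t ≠ 0 := by rw [fc_T G T htT]; norm_num
            have hex : ∃ w : c.supp, ι w = t := by
              by_contra hno
              push_neg at hno
              exact hat (hout t hno)
            obtain ⟨w, hw⟩ := hex
            have hmem := him_N w
            rw [hw] at hmem
            exact ((mem_nonNbhd G T).mp hmem).1 htT
          · have hexu : ∃ w : c.supp, ι w = u := by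
              by_contra hno
              push_neg at hno
              have hz := hout u hno
              rw [fc_N G T huN] at hz
              norm_num at hz
            obtain ⟨wu, rfl⟩ := hexu
            obtain ⟨wv, hwv, hadj'⟩ := hadj_supp wu v hvN hadj
            have heq := hgc wu wv
            rw [hg_im wu, hg_im wv] at heq
            exact hvalne _ _ (col.valid hadj') heq
    have hlt : vectorSpan ℝ S < LinearMap.ker (dotL (fc G T)) := by
      refine lt_of_le_of_ne hvs_le_a ?_
      intro h
      apply hxg
      have hx : x ∈ vectorSpan ℝ S := by
        rw [h]
        exact hxa
      exact hvs_le_g hx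
    have hfr := Submodule.finrank_lt_finrank_of_lt hlt
    rw [hker_rank _ haNe, hdim] at hfr
    exact lt_irrefl _ hfr
  · intro hcomp
    have hSne : S.Nonempty := by
      rcases T.eq_empty_or_nonempty with hTe | ⟨t, ht⟩
      · have hNu : nonNbhd G T = Finset.univ := hT0 hTe
        have hv₀ : (Classical.arbitrary V) ∈ (↑(nonNbhd G T) : Set V) := by
          rw [hNu]; simp
        set c := (G.induce (↑(nonNbhd G T) : Set V)).connectedComponentMk
          ⟨Classical.arbitrary V, hv₀⟩ with hc
        have hedge : ∃ u v : c.supp,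
            ((G.induce (↑(nonNbhd G T) : Set V)).induce c.supp).Adj u v := by
          by_contra hno
          push_neg at hno
          exact hcomp c (colorable_of_no_edges _ hno)
        obtain ⟨u, v, huv⟩ := hedge
        have hGuv : G.Adj ((u : {x // x ∈ (↑(nonNbhd G T) : Set V)}) : V)
            ((v : {x // x ∈ (↑(nonNbhd G T) : Set V)}) : V) := huv
        have huN : ((u : {x // x ∈ (↑(nonNbhd G T) : Set V)}) : V) ∈ nonNbhd G T :=
          Finset.mem_coe.mp (u : {x // x ∈ (↑(nonNbhd G T) : Set V)}).2
        have hvN : ((v : {x // x ∈ (↑(nonNbhd G T) : Set V)}) : V) ∈ nonNbhd G T :=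
          Finset.mem_coe.mp (v : {x // x ∈ (↑(nonNbhd G T) : Set V)}).2
        exact ⟨_, pairN_mem_tightSet G T huN hvN hGuv⟩
      · exact ⟨_, singleton_mem_tightSet G T ht⟩
    refine ⟨hSne, ?_⟩
    have hub : Module.finrank ℝ (vectorSpan ℝ S) ≤ Fintype.card V - 1 := by
      have := Submodule.finrank_mono hvs_le_a
      rwa [hker_rank _ haNe] at this
    have hsingle : ∀ v : V, Pi.single v (1:ℝ) ∈ Submodule.span ℝ S := by
      intro v
      by_cases hvT : v ∈ T
      · rw [← chiv_singleton]
        exact Submodule.subset_span (singleton_mem_tightSet G T hvT)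
      · by_cases hvN : v ∈ nonNbhd G T
        · have hv' : v ∈ (↑(nonNbhd G T) : Set V) := hvN
          set Gi := G.induce (↑(nonNbhd G T) : Set V) with hGi
          set c := Gi.connectedComponentMk ⟨v, hv'⟩ with hc
          have hn := hcomp c
          have hpre := comp_induce_preconnected Gi c
          have hvsupp : (⟨v, hv'⟩ : {x // x ∈ (↑(nonNbhd G T) : Set V)}) ∈ c.supp := rfl
          set wv : c.supp := ⟨⟨v, hv'⟩, hvsupp⟩ with hwv
          have hmem := single_mem_span_edges (Gi.induce c.supp) hpre hn wv
          set ι : c.supp → V := fun w => ((w : {x // x ∈ (↑(nonNbhd G T) : Set V)}) : V) with hι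
          have himg := Submodule.mem_map_of_mem (f := extL ι) hmem
          rw [Submodule.map_span] at himg
          rw [extL_single ι wv] at himg
          have h1 : ι wv = v := rfl
          rw [h1] at himg
          refine Submodule.span_le.mpr ?_ himg
          rintro y ⟨x, ⟨u', v', hadj', rfl⟩, rfl⟩
          apply Submodule.subset_span
          have hGadj : G.Adj (ι u') (ι v') := hadj'
          have hιinj : Function.Injective ι := fun w w' h => Subtype.ext (Subtype.ext h)
          rw [extL_edge ι hιinj u' v' hadj'.ne]
          have hu'N : ι u' ∈ nonNbhd G T :=
            Finset.mem_coe.mp (u' : {x // x ∈ (↑(nonNbhd G T) : Set V)}).2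
          have hv'N : ι v' ∈ nonNbhd G T :=
            Finset.mem_coe.mp (v' : {x // x ∈ (↑(nonNbhd G T) : Set V)}).2
          exact pairN_mem_tightSet G T hu'N hv'N hGadj
        · have hex : ∃ t ∈ T, G.Adj t v := by
            have h := hvN
            rw [mem_nonNbhd] at h
            push_neg at h
            exact h hvT
          obtain ⟨t, htT, hadj⟩ := hex
          have hne : t ≠ v := G.ne_of_adj hadj
          have h1 : Pi.single v (1:ℝ) = chiv {t, v} - chiv {t} := by
            rw [chiv_pair hne, chiv_singleton]
            abel
          rw [h1]
          exact sub_mem (Submodule.subset_span (pairT_mem_tightSet G T hT htT hadj))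
            (Submodule.subset_span (singleton_mem_tightSet G T htT))
    have hspan : Submodule.span ℝ S = ⊤ := by
      rw [eq_top_iff]
      intro x _
      have hx : x = ∑ v, x v • (Pi.single v 1 : V → ℝ) := by
        funext w
        rw [Finset.sum_apply]
        rw [Finset.sum_eq_single w]
        · simp
        · intro v _ hv
          rw [Pi.smul_apply, Pi.single_apply, if_neg (Ne.symm hv), smul_zero]
        · simp
      rw [hx]
      exact Submodule.sum_mem _ fun v _ => Submodule.smul_mem _ _ (hsingle v)
    obtain ⟨p₀, hp₀⟩ := hSne
    have hp₀ne : p₀ ≠ 0 := by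
      intro h
      have h2 := hS_dot p₀ hp₀
      rw [h, map_zero] at h2
      norm_num at h2
    have hsup : (⊤ : Submodule ℝ (V → ℝ)) ≤ vectorSpan ℝ S ⊔ Submodule.span ℝ {p₀} := by
      rw [← hspan]
      apply Submodule.span_le.mpr
      intro p hp
      have h1 : p = (p - p₀) + p₀ := by abel
      rw [h1]
      refine Submodule.add_mem _ (Submodule.mem_sup_left ?_)
        (Submodule.mem_sup_right (Submodule.mem_span_singleton_self p₀))
      have := vsub_mem_vectorSpan ℝ hp hp₀
      rwa [vsub_eq_sub] at this
    have hcard : Fintype.card V ≤ Module.finrank ℝ (vectorSpan ℝ S) + 1 := by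
      have h1 : Module.finrank ℝ (⊤ : Submodule ℝ (V → ℝ)) = Fintype.card V := by
        rw [finrank_top, Module.finrank_pi]
      have h2 := Submodule.finrank_mono hsup
      have h3 := Submodule.finrank_sup_add_finrank_inf_eq (vectorSpan ℝ S)
        (Submodule.span ℝ {p₀})
      have h4 : Module.finrank ℝ (Submodule.span ℝ ({p₀} : Set (V → ℝ))) = 1 :=
        finrank_span_singleton hp₀ne
      omega
    have h5 : 1 ≤ Fintype.card V := Fintype.card_pos
    omega
end
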